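/- arXiv:2603.18958 — 5 statements merged into one kernel-verified Lean document; each statement's English description precedes it below -/
import Mathlib

section
/- Let I = (G, s, t, R, c, A, k) be a Routing Plan instance with n vertices and m assets. If there exists a valid plan (of any finite length) with at least k surviving assets, then there exists a valid plan of length at most (m+2)·(2m+n)^2 with at least k surviving assets; in particular, the minimum length of an optimal valid plan is bounded by a fixed polynomial in n and m. -/
/-! ## The Routing Plan model -/

/-- An instance of the Routing Plan problem: an undirected simple topology `G`
with distinct initial and target locations `s, t`, a set `R ⊆ V ∖ {s,t}` of
traps, and reload times `c r ≥ 1` for the traps. -/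
structure RPInstance (V : Type) where
  G : SimpleGraph V
  s : V
  t : V
  R : Set V
  c : V → ℕ
  s_ne_t : s ≠ t
  s_not_trap : s ∉ R
  t_not_trap : t ∉ R
  c_pos : ∀ r ∈ R, 1 ≤ c r

/-- A plan assigns every asset and timestep a location; `none` plays the role of
the special location `†` of eliminated assets.  Trap `r` is *active* at time `j`
under plan `ρ` if no asset occupied `r` at any of the times `max (0, j - ℓ)` for
`ℓ ∈ {1, …, c r}` (truncated subtraction on `ℕ`). -/
def TrapActive {V A : Type} (I : RPInstance V) (ρ : A → ℕ → Option V) (r : V) (j : ℕ) : Prop :=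
  ∀ (a : A) (ℓ : ℕ), 1 ≤ ℓ → ℓ ≤ I.c r → ρ a (j - ℓ) ≠ some r

/-- The seven validity conditions for a plan `ρ` of length `L`:
every asset starts at `s` and never returns there after leaving; assets never
leave `t` or `†`; assets move along edges or stay put; no two distinct assets
share a vertex other than `s`, `t`, `†`; an asset stepping on an active trap is
eliminated in the next step; while some asset is outside `{t, †}` some asset
moves; and at time `L` all assets are at `t` or `†`, `L` being minimal such. -/
structure IsValidPlan {V A : Type} (I : RPInstance V) (ρ : A → ℕ → Option V) (L : ℕ) : Prop where
  start : ∀ a, ρ a 0 = some I.s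
  no_return : ∀ a j, ρ a (j + 1) = some I.s → ρ a j = some I.s
  stay_end : ∀ a j, (ρ a j = some I.t ∨ ρ a j = none) → ρ a (j + 1) = ρ a j
  move : ∀ a j v, ρ a (j + 1) = some v → ∃ u, ρ a j = some u ∧ (u = v ∨ I.G.Adj u v)
  no_collision : ∀ a a', a ≠ a' → ∀ j, ρ a j = ρ a' j →
    ρ a j = some I.s ∨ ρ a j = some I.t ∨ ρ a j = none
  trap_kill : ∀ a j r, r ∈ I.R → ρ a j = some r → TrapActive I ρ r j → ρ a (j + 1) = none
  progress : ∀ j, (∃ a, ρ a j ≠ some I.t ∧ ρ a j ≠ none) → ∃ a', ρ a' (j + 1) ≠ ρ a' j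
  finished : ∀ a, ρ a L = some I.t ∨ ρ a L = none
  tight : ∃ a, ρ a (L - 1) ≠ some I.t ∧ ρ a (L - 1) ≠ none

/-- The set of assets surviving under a plan `ρ` of length `L`. -/
def Survivors {V A : Type} (I : RPInstance V) (ρ : A → ℕ → Option V) (L : ℕ) : Set A :=
  {a | ρ a L = some I.t}

/-- The plan `ρ` activates some trap at timestep `j`, i.e. some asset steps on
an active trap at time `j` (and is hence eliminated). -/
def ActivatesAt {V A : Type} (I : RPInstance V) (ρ : A → ℕ → Option V) (j : ℕ) : Prop :=
  ∃ (a : A) (r : V), r ∈ I.R ∧ ρ a j = some r ∧ TrapActive I ρ r j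

/-! ### auxiliary lemmas -/

namespace ShortPlansAux

lemma none_persist {V A : Type} {I : RPInstance V} {ρ : A → ℕ → Option V} {L : ℕ}
    (h : IsValidPlan I ρ L) (a : A) {j j' : ℕ} (hjj : j ≤ j')
    (hn : ρ a j = none) : ρ a j' = none := by
  induction j', hjj using Nat.le_induction with
  | base => exact hn
  | succ n hn' ih => rw [h.stay_end a n (Or.inr ih)]; exact ih

lemma t_persist {V A : Type} {I : RPInstance V} {ρ : A → ℕ → Option V} {L : ℕ}
    (h : IsValidPlan I ρ L) (a : A) {j j' : ℕ} (hjj : j ≤ j')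
    (hn : ρ a j = some I.t) : ρ a j' = some I.t := by
  induction j', hjj using Nat.le_induction with
  | base => exact hn
  | succ n hn' ih => rw [h.stay_end a n (Or.inl ih)]; exact ih

/-- For every trap that is ever occupied there is an asset which occupies it
first (at a minimal time over all assets) and is eliminated right after. -/
lemma exists_dead {V A : Type} {I : RPInstance V} {ρ : A → ℕ → Option V} {L : ℕ}
    (h : IsValidPlan I ρ L) {r : V} (hr : r ∈ I.R)
    (hocc : ∃ j a, ρ a j = some r) :
    ∃ (b : A) (τ : ℕ), ρ b τ = some r ∧ ρ b (τ + 1) = none ∧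
      ∀ j' < τ, ∀ a', ρ a' j' ≠ some r := by
  classical
  have hP : ∃ j, ∃ a, ρ a j = some r := hocc
  obtain ⟨b, hb⟩ := Nat.find_spec hP
  set τ := Nat.find hP with hτ
  have hmin : ∀ j' < τ, ∀ a', ρ a' j' ≠ some r := fun j' hj' a' hcon =>
    Nat.find_min hP hj' ⟨a', hcon⟩
  have hτpos : 1 ≤ τ := by
    rcases Nat.eq_zero_or_pos τ with h0 | h1
    · exfalso
      rw [h0, h.start b] at hb
      have : I.s = r := by injection hb
      exact I.s_not_trap (this ▸ hr)
    · exact h1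
  have hact : TrapActive I ρ r τ := by
    intro a ℓ h1 h2 hcon
    exact hmin (τ - ℓ) (by omega) a hcon
  exact ⟨b, τ, hb, h.trap_kill b τ r hr hb hact, hmin⟩

lemma dead_not_survivor {V A : Type} {I : RPInstance V} {ρ : A → ℕ → Option V} {L : ℕ}
    (h : IsValidPlan I ρ L) {b : A} {τ : ℕ} {r : V} (hr : r ∈ I.R)
    (hbτ : ρ b τ = some r) (hbn : ρ b (τ + 1) = none) :
    b ∉ Survivors I ρ L := by
  intro hs
  have hs' : ρ b L = some I.t := hs
  by_cases hL : τ + 1 ≤ L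
  · have := none_persist h b hL hbn
    rw [hs'] at this
    exact Option.some_ne_none _ this
  · have hLτ : L ≤ τ := by omega
    have := t_persist h b hLτ hs'
    rw [hbτ] at this
    have : r = I.t := by injection this
    exact I.t_not_trap (this ▸ hr)

lemma getVert_mem_support {V : Type} {G : SimpleGraph V} {u w : V} (p : G.Walk u w) (i : ℕ) :
    p.getVert i ∈ p.support := by
  induction p generalizing i with
  | nil => cases i <;> simp [SimpleGraph.Walk.getVert]
  | cons h q ih =>
    cases i with
    | zero => simp [SimpleGraph.Walk.getVert]
    | succ n =>
      rw [SimpleGraph.Walk.support_cons]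
      exact List.mem_cons_of_mem _ (ih n)

lemma isPath_getVert_injOn {V : Type} {G : SimpleGraph V} {u w : V} {p : G.Walk u w}
    (hp : p.IsPath) : ∀ i ≤ p.length, ∀ j ≤ p.length, p.getVert i = p.getVert j → i = j := by
  induction p with
  | nil => intro i hi j hj _; simp at hi hj; omega
  | cons hadj q ih =>
    intro i hi j hj hij
    rw [SimpleGraph.Walk.cons_isPath_iff] at hp
    obtain ⟨hq, hu⟩ := hp
    cases i with
    | zero =>
      cases j with
      | zero => rfl
      | succ n =>
        exfalso
        apply hu
        rw [SimpleGraph.Walk.getVert_zero, SimpleGraph.Walk.getVert_cons_succ] at hij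
        rw [hij]
        exact getVert_mem_support q n
    | succ n =>
      cases j with
      | zero =>
        exfalso
        apply hu
        rw [SimpleGraph.Walk.getVert_zero, SimpleGraph.Walk.getVert_cons_succ] at hij
        rw [← hij]
        exact getVert_mem_support q n
      | succ n' =>
        have := ih hq n (by simpa using hi) n' (by simpa using hj)
          (by rwa [SimpleGraph.Walk.getVert_cons_succ, SimpleGraph.Walk.getVert_cons_succ] at hij)
        omega

end ShortPlansAux

namespace ShortPlansAux

/-- The single-file convoy plan along a simple path `vtx 0 = s, …, vtx p = t`
whose interior traps are `vtx (xx 0) < … < vtx (xx (q-1))`.  Asset number `i`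
(under the enumeration of `A`) leaves `s` at time `i+1` and follows the path
one step behind asset `i-1`; for `i < q` it commits suicide on the `i`-th trap
(which is forced: that trap is active when it arrives), and every later asset
crosses each trap exactly one step after its predecessor occupied it, so the
trap is inactive.  The assets `q, …, m-1` all survive. -/
lemma convoy {V A : Type} [Fintype A] (I : RPInstance V)
    (p q : ℕ) (vtx : ℕ → V) (xx : ℕ → ℕ)
    (hp : 1 ≤ p) (hv0 : vtx 0 = I.s) (hvp : vtx p = I.t)
    (hadj : ∀ y, y < p → I.G.Adj (vtx y) (vtx (y + 1)))
    (hinj : ∀ y, y ≤ p → ∀ z, z ≤ p → vtx y = vtx z → y = z)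
    (hqm : q + 1 ≤ Fintype.card A)
    (hxmem : ∀ i, i < q → 1 ≤ xx i ∧ xx i < p ∧ vtx (xx i) ∈ I.R)
    (hxmono : ∀ i j, i < q → j < q → (i < j ↔ xx i < xx j))
    (hcover : ∀ y, 1 ≤ y → y < p → vtx y ∈ I.R → ∃ i, i < q ∧ xx i = y) :
    ∃ (ρ' : A → ℕ → Option V) (L' : ℕ),
      IsValidPlan I ρ' L' ∧ L' = p + (Fintype.card A - 1) ∧
      Fintype.card A - q ≤ (Survivors I ρ' L').ncard := by
  classical
  set m := Fintype.card A with hmdef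
  have hm1 : 1 ≤ m := by omega
  set e := Fintype.equivFin A with hedef
  set f : A → ℕ → Option V := fun a j =>
    if (e a).val < q ∧ xx (e a).val < j - (e a).val then none
    else some (vtx (min (j - (e a).val) p)) with hfdef
  refine ⟨f, p + (m - 1), ?_, rfl, ?_⟩
  · constructor
    -- start
    · intro a
      have hd : ¬((e a).val < q ∧ xx (e a).val < 0 - (e a).val) := by
        rintro ⟨h1, h2⟩
        have := (hxmem _ h1).1
        omega
      simp only [hfdef, if_neg hd]
      rw [show min (0 - (e a).val) p = 0 by omega, hv0]
    -- no_return
    · intro a j hj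
      set i := (e a).val with hidef
      by_cases hd : i < q ∧ xx i < (j + 1) - i
      · simp [hfdef, ← hidef, hd] at hj
      · simp only [hfdef, ← hidef, if_neg hd, Option.some.injEq] at hj
        have h0 : min ((j + 1) - i) p = 0 :=
          hinj _ (by omega) 0 (by omega) (by rw [hj, hv0])
        have hd2 : ¬(i < q ∧ xx i < j - i) := by
          rintro ⟨h1, h2⟩
          have := (hxmem _ h1).1
          omega
        simp only [hfdef, ← hidef, if_neg hd2]
        rw [show min (j - i) p = 0 by omega, hv0]
    -- stay_end
    · intro a j hj
      set i := (e a).val with hidef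
      rcases hj with ht | hn
      · by_cases hd : i < q ∧ xx i < j - i
        · simp [hfdef, ← hidef, hd] at ht
        · simp only [hfdef, ← hidef, if_neg hd, Option.some.injEq] at ht
          have hmp : min (j - i) p = p := hinj _ (by omega) p le_rfl (by rw [ht, hvp])
          have hiq : ¬ i < q := by
            intro h1
            have h2 := (hxmem _ h1).2.1
            omega
          have hd2 : ¬(i < q ∧ xx i < (j + 1) - i) := fun hc => hiq hc.1
          simp only [hfdef, ← hidef, if_neg hd2, if_neg hd]
          rw [show min ((j + 1) - i) p = p by omega, hmp]
      · by_cases hd : i < q ∧ xx i < j - i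
        · have hd2 : i < q ∧ xx i < (j + 1) - i := ⟨hd.1, by omega⟩
          simp [hfdef, ← hidef, hd, hd2]
        · simp [hfdef, ← hidef, hd] at hn
    -- move
    · intro a j vv hj
      set i := (e a).val with hidef
      have hd2 : ¬(i < q ∧ xx i < (j + 1) - i) := by
        intro hc
        simp [hfdef, ← hidef, hc] at hj
      have hd1 : ¬(i < q ∧ xx i < j - i) := by
        rintro ⟨h1, h2⟩
        exact hd2 ⟨h1, by omega⟩
      simp only [hfdef, ← hidef, if_neg hd2, Option.some.injEq] at hj
      refine ⟨vtx (min (j - i) p), by simp only [hfdef, ← hidef, if_neg hd1], ?_⟩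
      by_cases hc : min ((j + 1) - i) p = min (j - i) p
      · left; rw [← hj, hc]
      · right
        have h1 : j - i < p ∧ (j + 1) - i = (j - i) + 1 := by omega
        rw [← hj, show min ((j + 1) - i) p = (j - i) + 1 by omega,
          show min (j - i) p = j - i by omega]
        exact hadj _ h1.1
    -- no_collision
    · intro a a' hne j hj
      set i := (e a).val with hidef
      set i' := (e a').val with hidef'
      have hii : i ≠ i' := fun hcon => hne (e.injective (Fin.val_injective hcon))
      by_cases hd : i < q ∧ xx i < j - i
      · right; right; simp [hfdef, ← hidef, hd]
      · by_cases hd' : i' < q ∧ xx i' < j - i'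
        · exfalso
          simp [hfdef, ← hidef, ← hidef', hd, hd'] at hj
        · simp only [hfdef, ← hidef, ← hidef', if_neg hd, if_neg hd',
            Option.some.injEq] at hj
          have hmm : min (j - i) p = min (j - i') p :=
            hinj _ (by omega) _ (by omega) hj
          have hcase : min (j - i) p = 0 ∨ min (j - i) p = p := by omega
          rcases hcase with h0 | hp'
          · left
            simp only [hfdef, ← hidef, if_neg hd]
            rw [h0, hv0]
          · right; left
            simp only [hfdef, ← hidef, if_neg hd]
            rw [hp', hvp]
    -- trap_kill
    · intro a j r hr hj hact
      set i := (e a).val with hidef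
      have hd1 : ¬(i < q ∧ xx i < j - i) := by
        intro hc
        simp [hfdef, ← hidef, hc] at hj
      simp only [hfdef, ← hidef, if_neg hd1, Option.some.injEq] at hj
      set y := min (j - i) p with hy
      have hyR : vtx y ∈ I.R := by rw [hj]; exact hr
      have hy0 : y ≠ 0 := by
        intro hc
        rw [hc, hv0] at hyR
        exact I.s_not_trap hyR
      have hyp : y ≠ p := by
        intro hc
        rw [hc, hvp] at hyR
        exact I.t_not_trap hyR
      have hylt : y < p ∧ y = j - i ∧ 1 ≤ y := by omega
      obtain ⟨ec, hec, hecy⟩ := hcover y hylt.2.2 hylt.1 hyR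
      by_cases hdie : i < q ∧ xx i = y
      · have hd2 : i < q ∧ xx i < (j + 1) - i := ⟨hdie.1, by omega⟩
        simp [hfdef, ← hidef, hd2]
      · exfalso
        have heci : ec < i := by
          by_cases hiq : i < q
          · have hxiy : y ≤ xx i := by omega
            have : xx ec < xx i := by
              rcases Nat.lt_or_ge (xx ec) (xx i) with h | h
              · exact h
              · exfalso
                have : xx i = y ∨ xx i < y := by omega
                rcases this with h' | h'
                · exact hdie ⟨hiq, h'⟩
                · omega
            exact (hxmono ec i hec hiq).mpr this
          · omega
        have hi1 : 1 ≤ i := by omega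
        have him : i < m := (e a).isLt
        set a' := e.symm ⟨i - 1, by omega⟩ with ha'
        have hia' : (e a').val = i - 1 := by simp [ha']
        have hapos : f a' (j - 1) = some r := by
          have hd3 : ¬((e a').val < q ∧ xx (e a').val < (j - 1) - (e a').val) := by
            rw [hia']
            rintro ⟨h1, h2⟩
            rw [show (j - 1) - (i - 1) = y by omega] at h2
            have : xx ec ≤ xx (i - 1) := by
              rcases Nat.eq_or_lt_of_le (show ec ≤ i - 1 by omega) with hE | hE
              · rw [hE]
              · exact le_of_lt ((hxmono ec (i - 1) hec h1).mp hE)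
            omega
          simp only [hfdef, if_neg hd3, hia']
          rw [show min ((j - 1) - (i - 1)) p = y by omega, hj]
        exact hact a' 1 le_rfl (I.c_pos r hr) hapos
    -- progress
    · intro j hj
      by_cases hjL : j < p + (m - 1)
      · by_cases hjm : j < m
        · refine ⟨e.symm ⟨j, by omega⟩, ?_⟩
          have hiv : (e (e.symm ⟨j, by omega⟩)).val = j := by simp
          intro hcon
          have hd1 : ¬(j < q ∧ xx j < j - j) := by rintro ⟨h1, h2⟩; omega
          have hd2 : ¬(j < q ∧ xx j < (j + 1) - j) := by
            rintro ⟨h1, h2⟩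
            have := (hxmem _ h1).1
            omega
          simp only [hfdef, hiv, if_neg hd1, if_neg hd2, Option.some.injEq] at hcon
          rw [show min ((j + 1) - j) p = 1 by omega, show min (j - j) p = 0 by omega] at hcon
          have := hinj 1 (by omega) 0 (by omega) hcon
          omega
        · refine ⟨e.symm ⟨m - 1, by omega⟩, ?_⟩
          have hiv : (e (e.symm ⟨m - 1, by omega⟩)).val = m - 1 := by simp
          intro hcon
          have hdq : ¬ (m - 1 < q) := by omega
          have hd1 : ¬(m - 1 < q ∧ xx (m - 1) < j - (m - 1)) := fun hc => hdq hc.1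
          have hd2 : ¬(m - 1 < q ∧ xx (m - 1) < (j + 1) - (m - 1)) := fun hc => hdq hc.1
          simp only [hfdef, hiv, if_neg hd1, if_neg hd2, Option.some.injEq] at hcon
          rw [show min ((j + 1) - (m - 1)) p = (j - (m - 1)) + 1 by omega,
            show min (j - (m - 1)) p = j - (m - 1) by omega] at hcon
          have := hinj _ (by omega) _ (by omega) hcon
          omega
      · exfalso
        obtain ⟨a, ha1, ha2⟩ := hj
        set i := (e a).val with hidef
        have him : i < m := (e a).isLt
        by_cases hiq : i < q
        · have hxi := (hxmem _ hiq).2.1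
          have hdead : i < q ∧ xx i < j - i := ⟨hiq, by omega⟩
          exact ha2 (by simp [hfdef, ← hidef, hdead])
        · have hd : ¬(i < q ∧ xx i < j - i) := fun hc => hiq hc.1
          apply ha1
          simp only [hfdef, ← hidef, if_neg hd]
          rw [show min (j - i) p = p by omega, hvp]
    -- finished
    · intro a
      set i := (e a).val with hidef
      have him : i < m := (e a).isLt
      by_cases hiq : i < q
      · right
        have hxi := (hxmem _ hiq).2.1
        have hdead : i < q ∧ xx i < (p + (m - 1)) - i := ⟨hiq, by omega⟩
        simp [hfdef, ← hidef, hdead]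
      · left
        have hd : ¬(i < q ∧ xx i < (p + (m - 1)) - i) := fun hc => hiq hc.1
        simp only [hfdef, ← hidef, if_neg hd]
        rw [show min ((p + (m - 1)) - i) p = p by omega, hvp]
    -- tight
    · refine ⟨e.symm ⟨m - 1, by omega⟩, ?_, ?_⟩
      · have hiv : (e (e.symm ⟨m - 1, by omega⟩)).val = m - 1 := by simp
        have hdq : ¬ (m - 1 < q) := by omega
        have hd : ¬(m - 1 < q ∧ xx (m - 1) < (p + (m - 1) - 1) - (m - 1)) := fun hc => hdq hc.1
        intro hcon
        simp only [hfdef, hiv, if_neg hd] at hcon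
        rw [show min ((p + (m - 1) - 1) - (m - 1)) p = p - 1 by omega] at hcon
        have hcon' : vtx (p - 1) = I.t := by injection hcon
        have := hinj (p - 1) (by omega) p le_rfl (by rw [hcon', hvp])
        omega
      · have hiv : (e (e.symm ⟨m - 1, by omega⟩)).val = m - 1 := by simp
        have hdq : ¬ (m - 1 < q) := by omega
        have hd : ¬(m - 1 < q ∧ xx (m - 1) < (p + (m - 1) - 1) - (m - 1)) := fun hc => hdq hc.1
        simp [hfdef, hiv, if_neg hd]
  · -- survivor count
    have hsub : ∀ a : A, q ≤ (e a).val → a ∈ Survivors I f (p + (m - 1)) := by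
      intro a ha
      have hd : ¬((e a).val < q ∧ xx (e a).val < (p + (m - 1)) - (e a).val) := by
        rintro ⟨h1, _⟩; omega
      show f a (p + (m - 1)) = some I.t
      have him : (e a).val < m := (e a).isLt
      simp only [hfdef, if_neg hd]
      rw [show min ((p + (m - 1)) - (e a).val) p = p by omega, hvp]
    set T : Finset A := Finset.univ.filter (fun a => q ≤ (e a).val) with hTdef
    have hTsub : (T : Set A) ⊆ Survivors I f (p + (m - 1)) := by
      intro a ha
      simp only [hTdef, Finset.coe_filter, Set.mem_setOf_eq] at ha
      exact hsub a ha.2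
    have hle : T.card ≤ (Survivors I f (p + (m - 1))).ncard := by
      calc T.card = (T : Set A).ncard := (Set.ncard_coe_finset T).symm
      _ ≤ _ := Set.ncard_le_ncard hTsub (Set.toFinite _)
    have hTcard : T.card = m - q := by
      rw [show m - q = (Finset.Ico q m).card by rw [Nat.card_Ico]]
      apply Finset.card_bij (fun a _ => (e a).val)
      · intro a ha
        simp only [hTdef, Finset.mem_filter] at ha
        simp only [Finset.mem_Ico]
        exact ⟨ha.2, (e a).isLt⟩
      · intro a _ b _ hab
        exact e.injective (Fin.val_injective hab)
      · intro y hy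
        simp only [Finset.mem_Ico] at hy
        refine ⟨e.symm ⟨y, hy.2⟩, ?_, by simp⟩
        simp [hTdef, hy.1]
    omega

end ShortPlansAux

open ShortPlansAux in
/-- **existence of short plans.**
If a Routing Plan instance with `n` vertices and `m` assets admits a valid plan
(of any finite length) with at least `k` surviving assets, then it admits a
valid plan of length at most `(m + 2) * (2 * m + n) ^ 2` with at least `k`
surviving assets; in particular the minimum length of an optimal valid plan is
polynomially bounded in `n` and `m`. -/
theorem short_plans_exist {V A : Type} [Fintype V] [Fintype A]
    (I : RPInstance V) (k : ℕ)
    (h : ∃ (ρ : A → ℕ → Option V) (L : ℕ),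
      IsValidPlan I ρ L ∧ k ≤ (Survivors I ρ L).ncard) :
    ∃ (ρ' : A → ℕ → Option V) (L' : ℕ),
      IsValidPlan I ρ' L' ∧
      L' ≤ (Fintype.card A + 2) * (2 * Fintype.card A + Fintype.card V) ^ 2 ∧
      k ≤ (Survivors I ρ' L').ncard := by
  classical
  obtain ⟨ρ, L, hval, hk⟩ := h
  set m := Fintype.card A with hmdef
  set n := Fintype.card V with hndef
  have hn2 : 2 ≤ n := Fintype.one_lt_card_iff_nontrivial.mpr ⟨⟨I.s, I.t, I.s_ne_t⟩⟩
  have hbound_pos : 1 ≤ (m + 2) * (2 * m + n) ^ 2 := by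
    have h2 : 0 < 2 * m + n := by omega
    exact Nat.mul_pos (by omega) (pow_pos h2 2)
  rcases Nat.eq_zero_or_pos k with hk0 | hk1
  · -- trivial suicide plan
    obtain ⟨a0, -, -⟩ := hval.tight
    refine ⟨fun a j => if j = 0 then some I.s else none, 1, ?_, by omega, by omega⟩
    constructor
    · intro a; simp
    · intro a j hj; simp at hj
    · intro a j hj
      by_cases hj0 : j = 0
      · subst hj0
        exfalso
        rcases hj with h1 | h1
        · rw [if_pos rfl] at h1
          have : I.s = I.t := by injection h1
          exact I.s_ne_t this
        · rw [if_pos rfl] at h1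
          exact nomatch h1
      · simp [hj0]
    · intro a j v hj; simp at hj
    · intro a a' hne j hj
      by_cases hj0 : j = 0 <;> simp [hj0]
    · intro a j r hr hj hact
      by_cases hj0 : j = 0
      · rw [hj0, if_pos rfl] at hj
        have : I.s = r := by injection hj
        exact absurd (this ▸ hr) I.s_not_trap
      · rw [if_neg hj0] at hj
        exact nomatch hj
    · intro j hj
      obtain ⟨a, ha1, ha2⟩ := hj
      by_cases hj0 : j = 0
      · exact ⟨a, by simp [hj0]⟩
      · exact absurd (by simp [hj0]) ha2
    · intro a; simp
    · refine ⟨a0, ?_, by simp⟩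
      intro hcon
      rw [show (1 : ℕ) - 1 = 0 from rfl, if_pos rfl] at hcon
      have : I.s = I.t := by injection hcon
      exact I.s_ne_t this
  · -- main case: k ≥ 1
    have hsurv_ne : (Survivors I ρ L).Nonempty := by
      rcases Set.eq_empty_or_nonempty (Survivors I ρ L) with he | he
      · rw [he, Set.ncard_empty] at hk; omega
      · exact he
    obtain ⟨a₀, ha₀⟩ := hsurv_ne
    have ha₀' : ρ a₀ L = some I.t := ha₀
    -- the survivor's trajectory
    set w : ℕ → V := fun j => (ρ a₀ j).getD I.s with hwdef
    have hw : ∀ j ≤ L, ρ a₀ j = some (w j) := by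
      intro j hj
      cases hc : ρ a₀ j with
      | none =>
        exfalso
        have := none_persist hval a₀ hj hc
        rw [ha₀'] at this
        exact Option.some_ne_none _ this
      | some u => simp [hwdef, hc]
    have hw0 : w 0 = I.s := by
      have h2 := hw 0 (Nat.zero_le L)
      rw [hval.start a₀] at h2
      injection h2 with h3
      exact h3.symm
    have hwL : w L = I.t := by
      have h2 := hw L le_rfl
      rw [ha₀'] at h2
      injection h2 with h3
      exact h3.symm
    -- build a walk following the trajectory backwards
    have key : ∀ d, d ≤ L → ∃ W : I.G.Walk (w (L - d)) I.t,
        ∀ u ∈ W.support, ∃ j, j ≤ L ∧ w j = u := by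
      intro d
      induction d with
      | zero =>
        intro _
        refine ⟨(SimpleGraph.Walk.nil : I.G.Walk I.t I.t).copy
          (by rw [Nat.sub_zero, hwL]) rfl, ?_⟩
        intro u hu
        rw [SimpleGraph.Walk.support_copy, SimpleGraph.Walk.support_nil] at hu
        simp at hu
        exact ⟨L, le_rfl, by simp [hu, hwL]⟩
      | succ d ih =>
        intro hdL
        obtain ⟨W, hWs⟩ := ih (by omega)
        have harith : L - d = (L - (d + 1)) + 1 := by omega
        obtain ⟨u, hu, hor⟩ := hval.move a₀ (L - (d + 1)) (w ((L - (d + 1)) + 1))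
          (by rw [← harith]; exact hw (L - d) (by omega))
        have hu' : u = w (L - (d + 1)) := by
          have h2 := hw (L - (d + 1)) (by omega)
          rw [h2] at hu
          injection hu with h3
          exact h3.symm
        rcases hor with heq | hadj
        · refine ⟨W.copy (by rw [harith, ← heq, hu']) rfl, ?_⟩
          intro x hx
          rw [SimpleGraph.Walk.support_copy] at hx
          exact hWs x hx
        · rw [hu'] at hadj
          refine ⟨SimpleGraph.Walk.cons hadj (W.copy (by rw [harith]) rfl), ?_⟩
          intro x hx
          rw [SimpleGraph.Walk.support_cons] at hx
          rcases List.mem_cons.mp hx with hx | hx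
          · exact ⟨L - (d + 1), by omega, hx.symm⟩
          · rw [SimpleGraph.Walk.support_copy] at hx
            exact hWs x hx
    obtain ⟨W, hWs⟩ := key L le_rfl
    set W₀ : I.G.Walk I.s I.t := W.copy (by rw [Nat.sub_self, hw0]) rfl with hW₀def
    have hW₀s : ∀ u ∈ W₀.support, ∃ j, j ≤ L ∧ w j = u := by
      intro u hu
      rw [hW₀def, SimpleGraph.Walk.support_copy] at hu
      exact hWs u hu
    set P := W₀.bypass with hPdef
    have hPpath : P.IsPath := SimpleGraph.Walk.bypass_isPath W₀
    set p := P.length with hpdef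
    set vtx : ℕ → V := fun y => P.getVert y with hvtxdef
    have hv0 : vtx 0 = I.s := SimpleGraph.Walk.getVert_zero P
    have hvp : vtx p = I.t := SimpleGraph.Walk.getVert_length P
    have hp1 : 1 ≤ p := by
      rcases Nat.eq_zero_or_pos p with h0 | h1
      · exact absurd (SimpleGraph.Walk.eq_of_length_eq_zero h0) I.s_ne_t
      · exact h1
    have hadjP : ∀ y, y < p → I.G.Adj (vtx y) (vtx (y + 1)) := fun y hy =>
      SimpleGraph.Walk.adj_getVert_succ P hy
    have hinjP : ∀ y, y ≤ p → ∀ z, z ≤ p → vtx y = vtx z → y = z := fun y hy z hz hyz =>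
      isPath_getVert_injOn hPpath y hy z hz hyz
    have hvisit : ∀ y, y ≤ p → ∃ j, j ≤ L ∧ w j = vtx y := by
      intro y _
      exact hW₀s (vtx y) (SimpleGraph.Walk.support_bypass_subset W₀ (getVert_mem_support P y))
    -- the traps along the path
    set X : Finset ℕ := (Finset.range (p + 1)).filter (fun y => vtx y ∈ I.R) with hXdef
    set q := X.card with hqdef
    set xx : ℕ → ℕ := fun i => if h : i < q then (X.orderEmbOfFin hqdef.symm ⟨i, h⟩ : ℕ) else 0
      with hxxdef
    have hxX : ∀ i, i < q → xx i ∈ X := by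
      intro i hi
      simp only [hxxdef, dif_pos hi]
      exact Finset.orderEmbOfFin_mem X hqdef.symm ⟨i, hi⟩
    have hXprop : ∀ y ∈ X, y ≤ p ∧ vtx y ∈ I.R := by
      intro y hy
      simp only [hXdef, Finset.mem_filter, Finset.mem_range] at hy
      exact ⟨by omega, hy.2⟩
    have hxmem : ∀ i, i < q → 1 ≤ xx i ∧ xx i < p ∧ vtx (xx i) ∈ I.R := by
      intro i hi
      obtain ⟨h1, h2⟩ := hXprop _ (hxX i hi)
      have hne0 : xx i ≠ 0 := by
        intro hc
        rw [hc, hv0] at h2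
        exact I.s_not_trap h2
      have hnep : xx i ≠ p := by
        intro hc
        rw [hc, hvp] at h2
        exact I.t_not_trap h2
      exact ⟨by omega, by omega, h2⟩
    have hxmono : ∀ i j, i < q → j < q → (i < j ↔ xx i < xx j) := by
      intro i j hi hj
      simp only [hxxdef, dif_pos hi, dif_pos hj]
      rw [(X.orderEmbOfFin hqdef.symm).lt_iff_lt]
      exact ⟨fun hh => hh, fun hh => hh⟩
    have hcover : ∀ y, 1 ≤ y → y < p → vtx y ∈ I.R → ∃ i, i < q ∧ xx i = y := by
      intro y h1 h2 h3
      have hyX : y ∈ X := by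
        simp only [hXdef, Finset.mem_filter, Finset.mem_range]
        exact ⟨by omega, h3⟩
      have : y ∈ Set.range (X.orderEmbOfFin hqdef.symm) := by
        rw [Finset.range_orderEmbOfFin]
        exact_mod_cast hyX
      obtain ⟨i, hi⟩ := this
      exact ⟨i.val, i.isLt, by simp only [hxxdef, dif_pos i.isLt, Fin.eta]; exact hi⟩
    -- counting: q + k ≤ m
    set Sf : Finset A := Finset.univ.filter (fun a => ρ a L = some I.t) with hSfdef
    have hSurvSf : Survivors I ρ L = (Sf : Set A) := by
      ext a
      simp [hSfdef, Survivors]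
    have hkSf : k ≤ Sf.card := by
      rw [hSurvSf, Set.ncard_coe_finset] at hk
      exact hk
    have hdead : ∀ y ∈ X, ∃ bτ : A × ℕ, ρ bτ.1 bτ.2 = some (vtx y) ∧
        ρ bτ.1 (bτ.2 + 1) = none ∧ ∀ j' < bτ.2, ∀ a', ρ a' j' ≠ some (vtx y) := by
      intro y hy
      obtain ⟨hyp', hyR⟩ := hXprop y hy
      obtain ⟨j, hjL, hjw⟩ := hvisit y hyp'
      obtain ⟨b, τ, h1, h2, h3⟩ := exists_dead hval hyR ⟨j, a₀, by rw [hw j hjL, hjw]⟩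
      exact ⟨⟨b, τ⟩, h1, h2, h3⟩
    set F : ℕ → A := fun y => if h : y ∈ X then (hdead y h).choose.1 else a₀ with hFdef
    have hqcard : q ≤ (Finset.univ \ Sf).card := by
      apply Finset.card_le_card_of_injOn F
      · intro y hy
        simp only [Finset.mem_coe] at hy ⊢
        obtain ⟨h1, h2, h3⟩ := (hdead y hy).choose_spec
        simp only [hFdef, dif_pos hy]
        simp only [Finset.mem_sdiff, Finset.mem_univ, true_and, hSfdef, Finset.mem_filter,
          not_and]
        exact fun hcon => dead_not_survivor hval (hXprop y hy).2 h1 h2 hcon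
      · intro y hyc y' hyc' hF
        have hy : y ∈ X := Finset.mem_coe.mp hyc
        have hy' : y' ∈ X := Finset.mem_coe.mp hyc'
        by_contra hne
        have hvne : vtx y ≠ vtx y' := by
          intro hc
          exact hne (hinjP y (hXprop y hy).1 y' (hXprop y' hy').1 hc)
        obtain ⟨h1, h2, h3⟩ := (hdead y hy).choose_spec
        obtain ⟨h1', h2', h3'⟩ := (hdead y' hy').choose_spec
        simp only [hFdef, dif_pos hy, dif_pos hy'] at hF
        set b := (hdead y hy).choose.1 with hbdef
        set τ := (hdead y hy).choose.2 with hτdef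
        set b' := (hdead y' hy').choose.1 with hbdef'
        set τ' := (hdead y' hy').choose.2 with hτdef'
        rcases lt_trichotomy τ τ' with hlt | heq | hgt
        · have := none_persist hval b (show τ + 1 ≤ τ' by omega) h2
          rw [hF] at this
          rw [this] at h1'
          exact nomatch h1'
        · rw [← hF, ← heq] at h1'
          rw [h1] at h1'
          exact hvne (by injection h1')
        · have := none_persist hval b' (show τ' + 1 ≤ τ by omega) h2'
          rw [← hF] at this
          rw [this] at h1
          exact nomatch h1
    have hcard_sdiff : (Finset.univ \ Sf).card = m - Sf.card := by
      rw [Finset.card_sdiff_of_subset (Finset.subset_univ Sf), hmdef]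
      rfl
    have hSfm : Sf.card ≤ m := by
      rw [hmdef]
      exact Finset.card_le_univ Sf
    have hqk : q + k ≤ m := by omega
    -- apply the convoy
    obtain ⟨ρ', L', hvalid', hL', hcount'⟩ :=
      convoy I p q vtx xx hp1 hv0 hvp hadjP hinjP (by rw [← hmdef]; omega) hxmem hxmono hcover
    refine ⟨ρ', L', hvalid', ?_, ?_⟩
    · -- length bound
      have hpn : p + 1 ≤ n := by
        have h1 : P.support.length = p + 1 := SimpleGraph.Walk.length_support P
        have h2 : P.support.length ≤ n := hPpath.support_nodup.length_le_card
        omega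
      have hL'le : L' ≤ 2 * m + n := by omega
      have h1 : 2 * m + n ≤ (2 * m + n) ^ 2 := Nat.le_self_pow two_ne_zero _
      have h2 : (2 * m + n) ^ 2 ≤ (m + 2) * (2 * m + n) ^ 2 :=
        Nat.le_mul_of_pos_left _ (by omega)
      omega
    · omega
end

section
/- Let H be a connected simple graph on N vertices and let f, g : V(H) → {0,1} be two colorings with the same number of vertices colored 1. Then g can be obtained from f by a sequence of at most N(N−1)/2 swaps, where each swap exchanges the colors at the two endpoints of an edge of H. -/
open Finset

section TokenSwap

variable {W : Type} [DecidableEq W]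

/-- Swap the values of a coloring at two vertices. -/
def applySwap (f : W → Bool) (u w : W) : W → Bool :=
  Function.update (Function.update f u (f w)) w (f u)

lemma applySwap_apply (f : W → Bool) (u w x : W) :
    applySwap f u w x = if x = w then f u else if x = u then f w else f x := by
  simp [applySwap, Function.update_apply]

/-- Apply a list of swaps in order. -/
def applySwaps (f : W → Bool) : List (W × W) → (W → Bool)
  | [] => f
  | p :: l => applySwaps (applySwap f p.1 p.2) l

lemma applySwaps_append (f : W → Bool) (l₁ l₂ : List (W × W)) :
    applySwaps f (l₁ ++ l₂) = applySwaps (applySwaps f l₁) l₂ := by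
  induction l₁ generalizing f with
  | nil => rfl
  | cons p l ih => simp [applySwaps, ih]

lemma applySwap_eq_comp_swap (f : W → Bool) (u w : W) :
    applySwap f u w = f ∘ Equiv.swap u w := by
  funext x
  simp only [applySwap_apply, Function.comp_apply, Equiv.swap_apply_def]
  by_cases h1 : x = w <;> by_cases h2 : x = u <;>
    simp_all [Equiv.swap_apply_def] <;> split_ifs <;> simp_all

/-- number of `true` vertices -/
def cnt {α : Type} [Fintype α] (f : α → Bool) : ℕ :=
  (Finset.univ.filter fun w => f w = true).card

lemma cnt_applySwap [Fintype W] (f : W → Bool) (u w : W) :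
    cnt (applySwap f u w) = cnt f := by
  rw [applySwap_eq_comp_swap]
  unfold cnt
  rw [← Fintype.card_subtype, ← Fintype.card_subtype]
  exact Fintype.card_congr ((Equiv.swap u w).subtypeEquiv (fun x => Iff.rfl))

lemma cnt_applySwaps [Fintype W] (f : W → Bool) (l : List (W × W)) :
    cnt (applySwaps f l) = cnt f := by
  induction l generalizing f with
  | nil => rfl
  | cons p l ih =>
    rw [show applySwaps f (p :: l) = applySwaps (applySwap f p.1 p.2) l from rfl,
      ih, cnt_applySwap]

/-- swap list along a walk -/
def walkSwaps {H : SimpleGraph W} : {x y : W} → H.Walk x y → List (W × W)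
  | _, _, .nil => []
  | _, _, .cons (u := x) (v := b) _ q => (x, b) :: walkSwaps q

lemma walkSwaps_length {H : SimpleGraph W} {x y : W} (p : H.Walk x y) :
    (walkSwaps p).length = p.length := by
  induction p with
  | nil => rfl
  | cons h q ih => simp [walkSwaps, ih]

lemma walkSwaps_adj {H : SimpleGraph W} {x y : W} (p : H.Walk x y) :
    ∀ pr ∈ walkSwaps p, H.Adj pr.1 pr.2 := by
  induction p with
  | nil => simp [walkSwaps]
  | cons h q ih =>
    intro pr hpr
    rcases List.mem_cons.mp hpr with h' | h'
    · subst h'; exact h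
    · exact ih pr h'

lemma applySwaps_walkSwaps_end {H : SimpleGraph W} {x y : W} (p : H.Walk x y)
    (f : W → Bool) : applySwaps f (walkSwaps p) y = f x := by
  induction p generalizing f with
  | nil => rfl
  | @cons x b y h q ih =>
    show applySwaps (applySwap f x b) (walkSwaps q) y = f x
    rw [ih (applySwap f x b)]
    simp [applySwap_apply]

/-- extend a coloring on `{x // x ≠ v}` by value `c` at `v` -/
def extCol (v : W) (c : Bool) (h : {x : W // x ≠ v} → Bool) : W → Bool :=
  fun x => if hx : x = v then c else h ⟨x, hx⟩

lemma extCol_applySwap (v : W) (c : Bool) (h : {x : W // x ≠ v} → Bool)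
    (u w : {x : W // x ≠ v}) :
    extCol v c (applySwap h u w) = applySwap (extCol v c h) u.1 w.1 := by
  funext x
  by_cases hx : x = v
  · subst hx
    have h1 : x ≠ w.1 := fun h' => w.2 h'.symm
    have h2 : x ≠ u.1 := fun h' => u.2 h'.symm
    simp [extCol, applySwap_apply, h1, h2]
  · simp only [extCol, applySwap_apply, dif_neg hx]
    have hw : (⟨x, hx⟩ : {x : W // x ≠ v}) = w ↔ x = w.1 := Subtype.ext_iff
    have hu : (⟨x, hx⟩ : {x : W // x ≠ v}) = u ↔ x = u.1 := Subtype.ext_iff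
    by_cases h1 : x = w.1
    · simp [hw.mpr h1, h1, dif_neg u.2, Subtype.ext_iff, u.2]
    · by_cases h2 : x = u.1
      · simp [h1, hw, hu, h2, dif_neg w.2, Subtype.ext_iff, w.2, u.2]
      · simp [h1, h2, hw, hu, dif_neg hx, Subtype.ext_iff]

lemma applySwaps_extCol (v : W) (c : Bool)
    (l : List ({x : W // x ≠ v} × {x : W // x ≠ v})) (h : {x : W // x ≠ v} → Bool) :
    applySwaps (extCol v c h) (l.map fun p => (p.1.1, p.2.1)) = extCol v c (applySwaps h l) := by
  induction l generalizing h with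
  | nil => rfl
  | cons p l ih =>
    show applySwaps (applySwap (extCol v c h) p.1.1 p.2.1) _ = _
    rw [← extCol_applySwap, ih]
    rfl

lemma cnt_subtype [Fintype W] (v : W) (h : W → Bool) :
    cnt h = cnt (fun x : {x : W // x ≠ v} => h x.1) + (if h v = true then 1 else 0) := by
  unfold cnt
  rw [Finset.card_filter, Finset.card_filter]
  rw [← Finset.sum_erase_add _ _ (Finset.mem_univ v)]
  congr 1
  rw [Finset.sum_subtype (p := fun x : W => x ≠ v) (Finset.univ.erase v) (fun x => by simp)
    (fun w => if h w = true then 1 else 0)]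

end TokenSwap

section Main

/-- Existence of a one-true-count-witness ≠ v when needed -/
lemma exists_source {W : Type} [Fintype W] [DecidableEq W]
    (f g : W → Bool) (hfg : cnt f = cnt g) (v : W) (hne : f v ≠ g v) :
    ∃ u' : W, u' ≠ v ∧ f u' = g v := by
  cases hgv : g v with
  | true =>
    have hfv : f v = false := by
      cases h : f v
      · rfl
      · exact absurd (h.trans hgv.symm) hne
    have hpos : 0 < cnt g := by
      unfold cnt
      exact Finset.card_pos.mpr ⟨v, Finset.mem_filter.mpr ⟨Finset.mem_univ v, hgv⟩⟩
    rw [← hfg] at hpos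
    obtain ⟨u', hu'⟩ := Finset.card_pos.mp hpos
    rw [Finset.mem_filter] at hu'
    refine ⟨u', fun h => ?_, hu'.2⟩
    rw [h, hfv] at hu'
    exact Bool.false_ne_true hu'.2
  | false =>
    have hfv : f v = true := by
      cases h : f v
      · exact absurd (h.trans hgv.symm) hne
      · rfl
    by_contra hco
    push_neg at hco
    have hall : ∀ u' : W, f u' = true := by
      intro u'
      by_cases h : u' = v
      · rw [h]; exact hfv
      · cases h2 : f u' with
        | true => rfl
        | false => exact absurd h (by simpa [h2] using hco u')
    have hNf : cnt f = Fintype.card W := by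
      unfold cnt
      rw [Finset.filter_true_of_mem (fun x _ => hall x), Finset.card_univ]
    have hcg : (Finset.univ.filter fun w => g w = true).card = Fintype.card W := by
      have h4 : cnt g = Fintype.card W := by rw [← hfg, hNf]
      simpa [cnt] using h4
    have huniv2 : (Finset.univ.filter fun w => g w = true) = Finset.univ :=
      Finset.eq_of_subset_of_card_le (Finset.filter_subset _ _)
        (by rw [hcg, Finset.card_univ])
    have hvmem : v ∈ Finset.univ.filter fun w => g w = true := by
      rw [huniv2]; exact Finset.mem_univ v
    have : g v = true := (Finset.mem_filter.mp hvmem).2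
    rw [this] at hgv
    exact Bool.noConfusion hgv

/-- lift of walks avoiding `v` to reachability in the vertex-deleted subgraph -/
lemma walk_lift {W : Type} [DecidableEq W] {H : SimpleGraph W} (v : W) :
    ∀ {x y : W} (p : H.Walk x y) (hx : x ≠ v) (hy : y ≠ v), v ∉ p.support →
    (H.comap (Subtype.val : {z : W // z ≠ v} → W)).Reachable ⟨x, hx⟩ ⟨y, hy⟩ := by
  intro x y p
  induction p with
  | nil => intro hx hy _; exact SimpleGraph.Reachable.refl _
  | @cons x b y h q ih =>
    intro hx hy hv
    rw [SimpleGraph.Walk.support_cons, List.mem_cons] at hv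
    push_neg at hv
    have hb : b ≠ v := fun hbv => hv.2 (hbv ▸ q.start_mem_support)
    have hadj : (H.comap (Subtype.val : {z : W // z ≠ v} → W)).Adj ⟨x, hx⟩ ⟨b, hb⟩ := h
    exact hadj.reachable.trans (ih hb hy hv.2)

lemma key : ∀ (N : ℕ) (W : Type) [Fintype W] [DecidableEq W] (H : SimpleGraph W),
    H.Connected → Fintype.card W = N → ∀ f g : W → Bool, cnt f = cnt g →
    ∃ l : List (W × W), (∀ p ∈ l, H.Adj p.1 p.2) ∧ applySwaps f l = g ∧
      l.length ≤ N * (N - 1) / 2 := by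
  intro N
  induction N using Nat.strong_induction_on with
  | _ N ih =>
    intro W _ _ H hconn hcard f g hfg
    by_cases h0 : N = 0
    · subst h0
      have he : IsEmpty W := Fintype.card_eq_zero_iff.mp hcard
      exact ⟨[], by simp, funext fun x => (he.false x).elim, by simp⟩
    by_cases h1 : N = 1
    · subst h1
      obtain ⟨a, ha⟩ := Fintype.card_eq_one_iff.mp hcard
      have huniv : (Finset.univ : Finset W) = {a} := by
        ext x; simp [ha x]
      have hcnt : ∀ h : W → Bool, cnt h = if h a = true then 1 else 0 := by
        intro h
        unfold cnt
        rw [huniv, Finset.filter_singleton]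
        split_ifs <;> simp
      have hfa : f a = g a := by
        have h3 := hfg
        rw [hcnt f, hcnt g] at h3
        cases hfa' : f a <;> cases hga : g a <;> rw [hfa', hga] at h3 <;> simp_all
      refine ⟨[], by simp, funext fun x => ?_, by simp⟩
      rw [show x = a from ha x]
      exact hfa
    obtain ⟨N, rfl⟩ : ∃ M, N = M + 2 := ⟨N - 2, by omega⟩
    -- pick a root u and a vertex v at maximal distance from u
    have hne : Nonempty W := Fintype.card_pos_iff.mp (by omega)
    obtain ⟨u⟩ := hne
    obtain ⟨v, -, hmax⟩ := Finset.exists_max_image Finset.univ (fun x => H.dist x u)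
      ⟨u, Finset.mem_univ u⟩
    have hmax : ∀ x : W, H.dist x u ≤ H.dist v u := fun x => hmax x (Finset.mem_univ x)
    -- v ≠ u
    obtain ⟨x0, hx0⟩ := Fintype.exists_ne_of_one_lt_card (by omega) u
    have hdistpos : 0 < H.dist v u :=
      lt_of_lt_of_le (hconn.pos_dist_of_ne hx0) (hmax x0)
    have hvu : v ≠ u := by
      intro h; rw [h, SimpleGraph.dist_self] at hdistpos; omega
    -- Step 1: a swap list making v correct
    have step1 : ∃ l₁ : List (W × W), (∀ p ∈ l₁, H.Adj p.1 p.2) ∧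
        l₁.length ≤ N + 1 ∧ (applySwaps f l₁) v = g v := by
      by_cases hfg' : f v = g v
      · exact ⟨[], by simp, by simp, hfg'⟩
      · obtain ⟨u', hu'v, hu'⟩ := exists_source f g hfg v hfg'
        obtain ⟨p0⟩ := hconn u' v
        refine ⟨walkSwaps p0.toPath.1, walkSwaps_adj _, ?_, ?_⟩
        · rw [walkSwaps_length]
          have := SimpleGraph.Walk.IsPath.length_lt p0.toPath.2
          omega
        · rw [applySwaps_walkSwaps_end, hu']
    obtain ⟨l₁, hl₁adj, hl₁len, hl₁v⟩ := step1
    set f1 := applySwaps f l₁ with hf1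
    have hcnt1 : cnt f1 = cnt g := by rw [hf1, cnt_applySwaps]; exact hfg
    -- Step 2: the vertex-deleted subgraph is connected
    have huv : u ≠ v := Ne.symm hvu
    have hreach : ∀ a : {x : W // x ≠ v},
        (H.comap (Subtype.val : {x : W // x ≠ v} → W)).Reachable a ⟨u, huv⟩ := by
      intro a
      obtain ⟨p, hp⟩ := (hconn a.1 u).exists_walk_length_eq_dist
      have hvns : v ∉ p.support := by
        intro hvs
        have hq := SimpleGraph.Walk.take_spec p hvs
        have hlen : (p.takeUntil v hvs).length + (p.dropUntil v hvs).length = p.length := by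
          rw [← SimpleGraph.Walk.length_append, hq]
        have h1 : 1 ≤ (p.takeUntil v hvs).length := by
          rcases Nat.eq_zero_or_pos (p.takeUntil v hvs).length with h | h
          · exact absurd (SimpleGraph.Walk.eq_of_length_eq_zero h) a.2
          · exact h
        have h2 : H.dist v u ≤ (p.dropUntil v hvs).length :=
          SimpleGraph.dist_le _
        have h3 := hmax a.1
        omega
      exact walk_lift v p a.2 huv hvns
    have hconn' : (H.comap (Subtype.val : {x : W // x ≠ v} → W)).Connected := by
      rw [SimpleGraph.connected_iff]
      exact ⟨fun a b => (hreach a).trans (hreach b).symm, ⟨⟨u, huv⟩⟩⟩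
    -- card of the subtype
    have hcardS : Fintype.card {x : W // x ≠ v} = N + 1 := by
      have h1 : Fintype.card {x : W // x ≠ v} = (Finset.univ.filter fun x : W => x ≠ v).card :=
        Fintype.card_subtype _
      rw [Finset.filter_ne', Finset.card_erase_of_mem (Finset.mem_univ v),
        Finset.card_univ, hcard] at h1
      omega
    -- colorings on the subtype
    have hcnt' : cnt (fun x : {x : W // x ≠ v} => f1 x.1)
        = cnt (fun x : {x : W // x ≠ v} => g x.1) := by
      have hA := cnt_subtype v f1
      have hB := cnt_subtype v g
      rw [hl₁v] at hA
      rw [hcnt1] at hA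
      omega
    obtain ⟨l', hl'adj, hl'eq, hl'len⟩ := ih (N + 1) (by omega) {x : W // x ≠ v}
      (H.comap (Subtype.val : {x : W // x ≠ v} → W)) hconn' hcardS
      (fun x => f1 x.1) (fun x => g x.1) hcnt'
    -- lift
    set l₂ : List (W × W) := l'.map (fun p => (p.1.1, p.2.1)) with hl₂
    have hext1 : extCol v (g v) (fun x : {x : W // x ≠ v} => f1 x.1) = f1 := by
      funext x
      by_cases hx : x = v
      · rw [extCol, dif_pos hx, hx, hl₁v]
      · rw [extCol, dif_neg hx]
    have hext2 : extCol v (g v) (fun x : {x : W // x ≠ v} => g x.1) = g := by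
      funext x
      by_cases hx : x = v
      · rw [extCol, dif_pos hx, hx]
      · rw [extCol, dif_neg hx]
    have hl₂eq : applySwaps f1 l₂ = g := by
      rw [← hext1, hl₂, applySwaps_extCol, hl'eq, hext2]
    refine ⟨l₁ ++ l₂, ?_, ?_, ?_⟩
    · intro p hp
      rcases List.mem_append.mp hp with h | h
      · exact hl₁adj p h
      · rw [hl₂] at h
        obtain ⟨q, hq, rfl⟩ := List.mem_map.mp h
        exact hl'adj q hq
    · rw [applySwaps_append, ← hf1, hl₂eq]
    · rw [List.length_append]
      have hlen2 : l₂.length = l'.length := by rw [hl₂, List.length_map]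
      have harith : (N + 1) + (N + 1) * N / 2 ≤ (N + 2) * (N + 1) / 2 := by
        have : (N + 2) * (N + 1) = (N + 1) * N + (N + 1) * 2 := by ring
        rw [this, Nat.add_mul_div_right _ _ (by norm_num : (0:ℕ) < 2)]
        omega
      have hb : (N + 1) * ((N + 1) - 1) / 2 = (N + 1) * N / 2 := by norm_num
      rw [hb] at hl'len
      calc l₁.length + l₂.length ≤ (N + 1) + (N + 1) * N / 2 := by omega
        _ ≤ (N + 2) * (N + 1) / 2 := harith
        _ = (N + 2) * ((N + 2) - 1) / 2 := by norm_num

end Main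


/-- **token-swapping bound.**
Let `H` be a connected simple graph on `N` vertices and `f, g` two
`{0,1}`-colorings with the same number of vertices colored `1` (`true`).
Then `g` is obtained from `f` by a sequence of at most `N * (N - 1) / 2`
swaps, each swap exchanging the colors at the two endpoints of an edge. -/
theorem token_swapping_bound {W : Type} [Fintype W] [DecidableEq W]
    (H : SimpleGraph W) (hconn : H.Connected)
    (f g : W → Bool)
    (hcount : Set.ncard {v | f v = true} = Set.ncard {v | g v = true}) :
    ∃ (n : ℕ) (seq : Fin (n + 1) → W → Bool),
      n ≤ Fintype.card W * (Fintype.card W - 1) / 2 ∧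
      seq 0 = f ∧ seq (Fin.last n) = g ∧
      ∀ i : Fin n, ∃ u w : W, H.Adj u w ∧
        seq i.succ =
          Function.update (Function.update (seq i.castSucc) u (seq i.castSucc w)) w
            (seq i.castSucc u) := by
  have hcnt : cnt f = cnt g := by
    have h1 : ∀ h : W → Bool, Set.ncard {v | h v = true} = cnt h := by
      intro h
      rw [Set.ncard_eq_toFinset_card', Set.toFinset_setOf]
      rfl
    rw [h1 f, h1 g] at hcount
    exact hcount
  obtain ⟨l, hadj, heq, hlen⟩ := key (Fintype.card W) W H hconn rfl f g hcnt
  refine ⟨l.length, fun i => applySwaps f (l.take i.1), hlen, rfl, ?_, ?_⟩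
  · show applySwaps f (l.take l.length) = g
    rw [List.take_length, heq]
  · intro i
    have hi : i.1 < l.length := i.2
    refine ⟨(l.get ⟨i.1, hi⟩).1, (l.get ⟨i.1, hi⟩).2,
      hadj _ (List.get_mem l _), ?_⟩
    show applySwaps f (l.take (i.1 + 1)) = _
    have ht : l.take (i.1 + 1) = l.take i.1 ++ [l.get ⟨i.1, hi⟩] := by
      rw [List.take_succ]
      congr 1
      rw [List.getElem?_eq_getElem hi]
      rfl
    rw [ht, applySwaps_append]
    rfl
end

section
/- Let I be a Routing Plan instance whose topology G is a path v_1, v_2, …, v_n with s = v_1 and t = v_n. If I admits a valid plan ρ with at least k surviving assets, then I admits a valid plan ρ' with at least k surviving assets in which no asset ever moves backward: for every asset a and every timestep j, either ρ'(a,j+1) = ρ'(a,j), or ρ'(a,j) = v_i and ρ'(a,j+1) = v_{i+1} for some i ∈ {1,…,n−1}, or ρ'(a,j+1) = †. -/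
/-- The path topology on `Fin n`: vertices `v_1, …, v_n` (0-indexed here as
`0, …, n-1`) with edges between consecutive vertices. -/
def pathGraph (n : ℕ) : SimpleGraph (Fin n) :=
  SimpleGraph.fromRel (fun a b => (b : ℕ) = (a : ℕ) + 1)


section Aux

variable {V A : Type} {I : RPInstance V} {ρ : A → ℕ → Option V} {L : ℕ}

lemma none_persists (hv : IsValidPlan I ρ L) {a : A} {j : ℕ} (h : ρ a j = none) :
    ∀ d, ρ a (j + d) = none := by
  intro d
  induction d with
  | zero => exact h
  | succ d ih =>
      have h2 := hv.stay_end a (j + d) (Or.inr ih)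
      rw [show j + (d + 1) = (j + d) + 1 from rfl, h2, ih]

lemma const_after (hv : IsValidPlan I ρ L) (a : A) :
    ∀ d, ρ a (L + d) = ρ a L := by
  intro d
  induction d with
  | zero => rfl
  | succ d ih =>
      have h2 : ρ a (L + d) = some I.t ∨ ρ a (L + d) = none := by
        rw [ih]; exact hv.finished a
      have h3 := hv.stay_end a (L + d) h2
      rw [show L + (d + 1) = (L + d) + 1 from rfl, h3, ih]

lemma none_at_L (hv : IsValidPlan I ρ L) {a : A} {j : ℕ} (h : ρ a j = none) :
    ρ a L = none := by
  rcases le_or_gt j L with hj | hj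
  · have h2 := none_persists hv h (L - j)
    rwa [Nat.add_sub_cancel' hj] at h2
  · have h2 := const_after hv a (j - L)
    rw [Nat.add_sub_cancel' hj.le, h] at h2
    exact h2.symm

end Aux

/-- In a valid plan on the path with at least one survivor, every trap kills
at least one asset, hence `|R| + |Survivors| ≤ |A|`. -/
lemma count_bound {A : Type} [Fintype A] {n : ℕ} (hn : 2 ≤ n)
    (I : RPInstance (Fin n)) (hG : I.G = pathGraph n)
    (hs : (I.s : ℕ) = 0) (ht : (I.t : ℕ) = n - 1)
    {ρ : A → ℕ → Option (Fin n)} {L : ℕ} (hv : IsValidPlan I ρ L)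
    (hS : (Survivors I ρ L).Nonempty) :
    I.R.ncard + (Survivors I ρ L).ncard ≤ Fintype.card A := by
  classical
  obtain ⟨a, ha⟩ := hS
  have haL : ρ a L = some I.t := ha
  have hsome : ∀ j, ρ a j ≠ none := by
    intro j h
    rw [none_at_L hv h] at haL
    cases haL
  set g : ℕ → ℕ := fun j => (((ρ a j).getD I.s : Fin n) : ℕ) with hg
  have hg0 : g 0 = 0 := by simp [hg, hv.start a, hs]
  have hgL : g L = n - 1 := by simp [hg, haL, ht]
  have hstep : ∀ j, g (j + 1) ≤ g j + 1 := by
    intro j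
    cases h : ρ a (j + 1) with
    | none => exact absurd h (hsome _)
    | some v =>
        obtain ⟨u, hu, huv⟩ := hv.move a j v h
        have h1 : g (j + 1) = (v : ℕ) := by simp [hg, h]
        have h2 : g j = (u : ℕ) := by simp [hg, hu]
        rcases huv with rfl | hadj
        · omega
        · rw [hG] at hadj
          rw [pathGraph, SimpleGraph.fromRel_adj] at hadj
          rcases hadj.2 with h' | h' <;> omega
  have hvisit : ∀ p : ℕ, p ≤ n - 1 → ∃ j, g j = p := by
    intro p hp
    have hQ : ∃ j, p ≤ g j := ⟨L, by omega⟩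
    rcases hj1 : Nat.find hQ with _ | j'
    · have h1 := Nat.find_spec hQ
      rw [hj1] at h1
      exact ⟨0, by omega⟩
    · have h1 : p ≤ g (j' + 1) := by
        have h2 := Nat.find_spec hQ
        rwa [hj1] at h2
      have h2 : ¬ p ≤ g j' := Nat.find_min hQ (by omega)
      have h3 := hstep j'
      exact ⟨j' + 1, by omega⟩
  have hvisitR : ∀ r : Fin n, r ∈ I.R → ∃ j, ∃ b : A, ρ b j = some r := by
    intro r hr
    have hrlt := r.isLt
    obtain ⟨j, hj⟩ := hvisit r (by omega)
    cases h : ρ a j with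
    | none => exact absurd h (hsome _)
    | some u =>
        refine ⟨j, a, ?_⟩
        rw [h]
        congr 1
        apply Fin.ext
        simp only [hg, h, Option.getD_some] at hj
        exact hj
  have key : ∀ r : Fin n, r ∈ I.R → ∃ (b : A) (j : ℕ), ρ b j = some r ∧
      ρ b (j + 1) = none ∧ ∀ j' < j, ∀ b' : A, ρ b' j' ≠ some r := by
    intro r hr
    have hex := hvisitR r hr
    obtain ⟨b, hb⟩ := Nat.find_spec hex
    have hmin : ∀ j' < Nat.find hex, ∀ b', ρ b' j' ≠ some r := by
      intro j' hj' b' hb'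
      exact Nat.find_min hex hj' ⟨b', hb'⟩
    have hj₀pos : 1 ≤ Nat.find hex := by
      rcases Nat.eq_zero_or_pos (Nat.find hex) with h0 | h0
      · rw [h0, hv.start b] at hb
        have h1 : I.s = r := Option.some_injective _ hb
        exact absurd (h1 ▸ hr) I.s_not_trap
      · exact h0
    have hact : TrapActive I ρ r (Nat.find hex) := by
      intro b' ℓ h1 h2
      exact hmin (Nat.find hex - ℓ) (by omega) b'
    exact ⟨b, Nat.find hex, hb, hv.trap_kill b (Nat.find hex) r hr hb hact, hmin⟩
  choose f tf hf1 hf2 hf3 using key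
  set F : Fin n → A := fun r => if hr : r ∈ I.R then f r hr else a with hF
  have hFval : ∀ r (hr : r ∈ I.R), F r = f r hr := by
    intro r hr
    simp only [hF, dif_pos hr]
  have hFnotS : ∀ r (hr : r ∈ I.R), F r ∉ Survivors I ρ L := by
    intro r hr hmem
    have h1 : ρ (F r) L = some I.t := hmem
    rw [hFval r hr, none_at_L hv (hf2 r hr)] at h1
    cases h1
  have haux : ∀ (x y : Fin n) (hx : x ∈ I.R) (hy : y ∈ I.R),
      f x hx = f y hy → tf x hx < tf y hy → False := by
    intro x y hx hy hxy hlt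
    have hd : ρ (f x hx) (tf x hx + 1) = none := hf2 x hx
    have h1 : ρ (f x hx) (tf y hy) = none := by
      have h2 := none_persists hv hd (tf y hy - (tf x hx + 1))
      rwa [Nat.add_sub_cancel' (by omega)] at h2
    rw [hxy, hf1 y hy] at h1
    cases h1
  have hinj : Set.InjOn F I.R := by
    intro r hr r' hr' heq
    rw [hFval r hr, hFval r' hr'] at heq
    by_contra hne
    rcases lt_trichotomy (tf r hr) (tf r' hr') with hlt | heq' | hlt
    · exact haux r r' hr hr' heq hlt
    · have h1 : ρ (f r hr) (tf r hr) = some r := hf1 r hr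
      have h2 : ρ (f r hr) (tf r hr) = some r' := by
        rw [heq, heq']
        exact hf1 r' hr'
      rw [h1] at h2
      exact hne (Option.some_injective _ h2)
    · exact haux r' r hr' hr heq.symm hlt
  have hdisj : Disjoint (F '' I.R) (Survivors I ρ L) := by
    rw [Set.disjoint_left]
    rintro x ⟨r, hr, rfl⟩ hx
    exact hFnotS r hr hx
  have hle : (F '' I.R ∪ Survivors I ρ L).ncard ≤ Fintype.card A := by
    rw [← Nat.card_eq_fintype_card, ← Set.ncard_univ]
    exact Set.ncard_le_ncard (Set.subset_univ _) Set.finite_univ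
  rwa [Set.ncard_union_eq hdisj (Set.toFinite _) (Set.toFinite _),
    Set.ncard_image_of_injOn hinj] at hle

/-- The trivial plan in which every asset is eliminated at the first step. -/
lemma trivial_plan {A : Type} [Fintype A] (hA : Nonempty A) {n : ℕ} (hn : 2 ≤ n)
    (I : RPInstance (Fin n)) :
    ∃ (ρ' : A → ℕ → Option (Fin n)) (L' : ℕ), IsValidPlan I ρ' L' ∧
      ∀ (a : A) (j : ℕ),
        ρ' a (j + 1) = ρ' a j ∨
        (∃ v w : Fin n, ρ' a j = some v ∧ ρ' a (j + 1) = some w ∧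
          (w : ℕ) = (v : ℕ) + 1) ∨
        ρ' a (j + 1) = none := by
  classical
  refine ⟨fun _ j => if j = 0 then some I.s else none, 1, ?_, ?_⟩
  · constructor
    · intro a; simp
    · intro a j h; simp at h
    · intro a j h
      rcases h with h | h
      · by_cases hj : j = 0
        · rw [hj] at h
          simp only [if_pos] at h
          exact absurd (Option.some_injective _ h) I.s_ne_t
        · simp [hj] at h
      · by_cases hj : j = 0
        · simp [hj] at h
        · simp [hj]
    · intro a j v h; simp at h
    · intro a a' _ j _
      by_cases hj : j = 0
      · left; simp [hj]
      · right; right; simp [hj]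
    · intro a j r _ _ _; simp
    · intro j hj
      obtain ⟨a⟩ := hA
      by_cases h0 : j = 0
      · exact ⟨a, by simp [h0]⟩
      · obtain ⟨b, hb1, hb2⟩ := hj
        simp [h0] at hb2
    · intro a; right; simp
    · obtain ⟨a⟩ := hA
      refine ⟨a, ?_, by simp⟩
      intro hc
      simp only [if_pos] at hc
      exact I.s_ne_t (Option.some_injective _ hc)
  · intro a j
    by_cases hj : j = 0
    · right; right; simp [hj]
    · left; simp [hj]

/-- The convoy plan: asset `a` starts marching right at time `e a`, one step
per round, and stops (is eliminated) upon reaching position `D (e a)` if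
`e a < q`; assets with `e a ≥ q` march all the way to the target. -/
def cplan {A : Type} {n m : ℕ} (q : ℕ) (D : ℕ → ℕ) (hD : ∀ i, D i < n) (e : A ≃ Fin m)
    (a : A) (j : ℕ) : Option (Fin n) :=
  if (e a : ℕ) < q ∧ (e a : ℕ) + D (e a : ℕ) < j then none
  else some ⟨min (j - (e a : ℕ)) (D (e a : ℕ)), lt_of_le_of_lt (min_le_right _ _) (hD _)⟩

/-- Construction of a monotone valid plan with `|A| - |R|` survivors. -/
lemma convoy {A : Type} [Fintype A] {n : ℕ} (hn : 2 ≤ n)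
    (I : RPInstance (Fin n)) (hG : I.G = pathGraph n)
    (hs : (I.s : ℕ) = 0) (ht : (I.t : ℕ) = n - 1)
    (hm : I.R.ncard + 1 ≤ Fintype.card A) :
    ∃ (ρ' : A → ℕ → Option (Fin n)) (L' : ℕ), IsValidPlan I ρ' L' ∧
      Fintype.card A - I.R.ncard ≤ (Survivors I ρ' L').ncard ∧
      ∀ (a : A) (j : ℕ),
        ρ' a (j + 1) = ρ' a j ∨
        (∃ v w : Fin n, ρ' a j = some v ∧ ρ' a (j + 1) = some w ∧
          (w : ℕ) = (v : ℕ) + 1) ∨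
        ρ' a (j + 1) = none := by
  classical
  set m := Fintype.card A with hmdef
  set q := I.R.ncard with hqdef
  set e := Fintype.equivFin A with hedef
  have hqm : q + 1 ≤ m := hm
  have hRbound : ∀ r : Fin n, r ∈ I.R → 1 ≤ (r : ℕ) ∧ (r : ℕ) ≤ n - 2 := by
    intro r hr
    have h1 : r ≠ I.s := fun h => I.s_not_trap (h ▸ hr)
    have h2 : r ≠ I.t := fun h => I.t_not_trap (h ▸ hr)
    have h3 : (r : ℕ) ≠ 0 := fun h => h1 (Fin.ext (by omega))
    have h4 : (r : ℕ) ≠ n - 1 := fun h => h2 (Fin.ext (by omega))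
    have h5 := r.isLt
    omega
  obtain ⟨D, hD1, hDle2, hDtop, hrank⟩ :
      ∃ D : ℕ → ℕ, (∀ i, 1 ≤ D i) ∧ (∀ i, i < q → D i ≤ n - 2) ∧
        (∀ i, q ≤ i → D i = n - 1) ∧
        (∀ r : Fin n, r ∈ I.R → ∀ i, (r : ℕ) < D i → 1 ≤ i ∧ (r : ℕ) ≤ D (i - 1)) := by
    rcases Nat.eq_zero_or_pos q with hq0 | hqpos
    · refine ⟨fun _ => n - 1, fun i => ?_, fun i hi => ?_, fun i _ => rfl, fun r hr => ?_⟩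
      · show 1 ≤ n - 1
        omega
      · exfalso
        omega
      · exfalso
        have hemp : I.R = ∅ := (Set.ncard_eq_zero (Set.toFinite I.R)).mp (by omega)
        rw [hemp] at hr
        exact absurd hr (Set.notMem_empty r)
    · have hTcard : (Set.toFinite I.R).toFinset.card = q :=
        (Set.ncard_eq_toFinset_card _ (Set.toFinite I.R)).symm
      set σ := (Set.toFinite I.R).toFinset.orderIsoOfFin hTcard with hσ
      have hmemT : ∀ x : Fin q, ((σ x : Fin n)) ∈ I.R := by
        intro x
        exact ((Set.toFinite I.R).mem_toFinset).mp (σ x).2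
      have hmono' : ∀ x y : Fin q, (x : ℕ) ≤ (y : ℕ) →
          ((σ x : Fin n) : ℕ) ≤ ((σ y : Fin n) : ℕ) := by
        intro x y hxy
        exact Fin.le_def.mp (Subtype.coe_le_coe.mpr (σ.monotone (Fin.le_def.mpr hxy)))
      refine ⟨fun i => if h : i < q then ((σ ⟨i, h⟩ : Fin n) : ℕ) else n - 1,
        ?_, ?_, ?_, ?_⟩
      · intro i
        show 1 ≤ if h : i < q then ((σ ⟨i, h⟩ : Fin n) : ℕ) else n - 1
        by_cases h : i < q
        · simp only [dif_pos h]
          exact (hRbound _ (hmemT ⟨i, h⟩)).1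
        · simp only [dif_neg h]; omega
      · intro i h
        show (if h : i < q then ((σ ⟨i, h⟩ : Fin n) : ℕ) else n - 1) ≤ n - 2
        simp only [dif_pos h]
        exact (hRbound _ (hmemT ⟨i, h⟩)).2
      · intro i h
        show (if h : i < q then ((σ ⟨i, h⟩ : Fin n) : ℕ) else n - 1) = n - 1
        simp only [dif_neg (by omega : ¬ i < q)]
      · intro r hr i hlt
        simp only [] at hlt ⊢
        have hrT : r ∈ (Set.toFinite I.R).toFinset := ((Set.toFinite I.R).mem_toFinset).mpr hr
        set l := σ.symm ⟨r, hrT⟩ with hl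
        have hσl : ((σ l : Fin n) : ℕ) = (r : ℕ) := by
          rw [hl]
          simp
        have hlq : (l : ℕ) < q := l.isLt
        by_cases hiq : i < q
        · rw [dif_pos hiq] at hlt
          have hli : (l : ℕ) < i := by
            by_contra hc
            push_neg at hc
            have h5 := hmono' ⟨i, hiq⟩ l hc
            omega
          refine ⟨by omega, ?_⟩
          have hi1 : i - 1 < q := by omega
          rw [dif_pos hi1]
          have h6 := hmono' l ⟨i - 1, hi1⟩ (by show (l : ℕ) ≤ i - 1; omega)
          omega
        · refine ⟨by omega, ?_⟩
          by_cases hi1 : i - 1 < q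
          · rw [dif_pos hi1]
            have h6 := hmono' l ⟨i - 1, hi1⟩ (by show (l : ℕ) ≤ i - 1; omega)
            omega
          · rw [dif_neg hi1]
            have h7 := (hRbound r hr).2
            omega
  have hDlt : ∀ i, D i < n := by
    intro i
    by_cases h : i < q
    · have := hDle2 i h; omega
    · have := hDtop i (by omega); omega
  set ρ' : A → ℕ → Option (Fin n) := cplan q D hDlt e with hρ'
  set L' := n + m - 2 with hL'
  have hnone : ∀ (a : A) (j : ℕ),
      ρ' a j = none ↔ ((e a : ℕ) < q ∧ (e a : ℕ) + D (e a : ℕ) < j) := by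
    intro a j
    rw [hρ']
    unfold cplan
    split_ifs with h
    · simpa using h
    · simpa using h
  have hsome2 : ∀ (a : A) (j : ℕ) (v : Fin n), ρ' a j = some v ↔
      (¬((e a : ℕ) < q ∧ (e a : ℕ) + D (e a : ℕ) < j) ∧
        (v : ℕ) = min (j - (e a : ℕ)) (D (e a : ℕ))) := by
    intro a j v
    rw [hρ']
    unfold cplan
    split_ifs with h
    · simp [h]
    · simp only [Option.some.injEq, h, not_false_iff, true_and]
      constructor
      · rintro rfl; rfl
      · intro hv; exact Fin.ext hv.symm
  have hadj : ∀ u v : Fin n, (v : ℕ) = (u : ℕ) + 1 → I.G.Adj u v := by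
    intro u v h
    rw [hG]
    rw [pathGraph, SimpleGraph.fromRel_adj]
    refine ⟨?_, Or.inl h⟩
    intro huv
    rw [huv] at h
    omega
  have hvalid : IsValidPlan I ρ' L' := by
    constructor
    · -- start
      intro a
      rw [hsome2]
      have h1 := hD1 (e a : ℕ)
      exact ⟨by omega, by omega⟩
    · -- no_return
      intro a j h
      rw [hsome2] at h ⊢
      obtain ⟨h1, h2⟩ := h
      have h3 := hD1 (e a : ℕ)
      exact ⟨by omega, by omega⟩
    · -- stay_end
      intro a j h
      rcases h with h | h
      · rw [h]
        rw [hsome2] at h ⊢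
        obtain ⟨h1, h2⟩ := h
        by_cases hiq : (e a : ℕ) < q
        · have h3 := hDle2 _ hiq
          exfalso
          omega
        · have h3 := hDtop _ (le_of_not_gt hiq)
          exact ⟨by omega, by omega⟩
      · rw [h]
        rw [hnone] at h ⊢
        omega
    · -- move
      intro a j v h
      rw [hsome2] at h
      obtain ⟨h1, h2⟩ := h
      have h1' : ¬((e a : ℕ) < q ∧ (e a : ℕ) + D (e a : ℕ) < j) := by omega
      refine ⟨⟨min (j - (e a : ℕ)) (D (e a : ℕ)),
        lt_of_le_of_lt (min_le_right _ _) (hDlt _)⟩,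
        (hsome2 _ _ _).mpr ⟨h1', rfl⟩, ?_⟩
      by_cases hxy : min (j - (e a : ℕ)) (D (e a : ℕ)) =
          min (j + 1 - (e a : ℕ)) (D (e a : ℕ))
      · refine Or.inl (Fin.ext ?_)
        show min (j - (e a : ℕ)) (D (e a : ℕ)) = (v : ℕ)
        omega
      · refine Or.inr (hadj _ _ ?_)
        show (v : ℕ) = min (j - (e a : ℕ)) (D (e a : ℕ)) + 1
        omega
    · -- no_collision
      intro a a' hne j heq
      by_cases hnone1 : ρ' a j = none
      · right; right; exact hnone1
      obtain ⟨v, hv⟩ := Option.ne_none_iff_exists'.mp hnone1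
      have hv2 : ρ' a' j = some v := by rw [← heq]; exact hv
      rcases Nat.eq_zero_or_pos (v : ℕ) with hv0 | hv0
      · left
        rw [hv]
        congr 1
        exact Fin.ext (by omega)
      by_cases hvt : (v : ℕ) = n - 1
      · right; left
        rw [hv]
        congr 1
        exact Fin.ext (by omega)
      exfalso
      have hval : ∀ b : A, ρ' b j = some v →
          (v : ℕ) = j - (e b : ℕ) ∧ (e b : ℕ) < j := by
        intro b hb
        obtain ⟨hb1, hb2⟩ := (hsome2 _ _ _).mp hb
        by_cases hbq : (e b : ℕ) < q
        · omega
        · have h5 := hDtop (e b : ℕ) (by omega)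
          omega
      have h6 := hval a hv
      have h7 := hval a' hv2
      have h8 : (e a : ℕ) = (e a' : ℕ) := by omega
      exact hne (e.injective (Fin.ext h8))
    · -- trap_kill
      intro a j r hr hrj hact
      by_cases hdead : ρ' a (j + 1) = none
      · exact hdead
      exfalso
      obtain ⟨h1, h2⟩ := (hsome2 _ _ _).mp hrj
      rw [hnone] at hdead
      have hrb := hRbound r hr
      have hlt : (r : ℕ) < D (e a : ℕ) ∧ (r : ℕ) = j - (e a : ℕ) ∧
          (e a : ℕ) < j := by
        by_cases hiq : (e a : ℕ) < q
        · omega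
        · have h5 := hDtop (e a : ℕ) (by omega)
          omega
      obtain ⟨hlt1, hlt2, hlt3⟩ := hlt
      obtain ⟨hi1, hile⟩ := hrank r hr (e a : ℕ) hlt1
      have hia := (e a).isLt
      set b := e.symm ⟨(e a : ℕ) - 1, by omega⟩ with hb
      have hbidx : (e b : ℕ) = (e a : ℕ) - 1 := by
        rw [hb]
        simp
      have hocc : ρ' b (j - 1) = some r := by
        rw [hsome2, hbidx]
        exact ⟨by omega, by omega⟩
      exact hact b 1 le_rfl (I.c_pos r hr) hocc
    · -- progress
      intro j hj
      obtain ⟨a, ha1, ha2⟩ := hj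
      have hchange : ∀ b : A, (e b : ℕ) ≤ j → ρ' b j ≠ some I.t →
          ρ' b j ≠ none → ρ' b (j + 1) ≠ ρ' b j := by
        intro b hbj hbt hbn hEq
        obtain ⟨w, hw⟩ := Option.ne_none_iff_exists'.mp hbn
        obtain ⟨h1, h2⟩ := (hsome2 _ _ _).mp hw
        have hw' : ρ' b (j + 1) = some w := by rw [hEq]; exact hw
        obtain ⟨h3, h4⟩ := (hsome2 _ _ _).mp hw'
        have hwt : (w : ℕ) ≠ n - 1 := by
          intro hc
          apply hbt
          rw [hw]
          congr 1
          exact Fin.ext (by omega)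
        by_cases hbq : (e b : ℕ) < q
        · have h5 := hDle2 _ hbq
          omega
        · have h5 := hDtop (e b : ℕ) (by omega)
          omega
      by_cases hij : (e a : ℕ) ≤ j
      · exact ⟨a, hchange a hij ha1 ha2⟩
      · push_neg at hij
        have hia := (e a).isLt
        set b := e.symm ⟨j, by omega⟩ with hbdef
        have hbidx : (e b : ℕ) = j := by
          rw [hbdef]
          simp
        have hbn : ρ' b j ≠ none := by
          intro hc
          rw [hnone, hbidx] at hc
          omega
        have hbt : ρ' b j ≠ some I.t := by
          intro hc
          obtain ⟨h1, h2⟩ := (hsome2 _ _ _).mp hc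
          rw [hbidx, ht] at h2
          omega
        exact ⟨b, hchange b (by omega) hbt hbn⟩
    · -- finished
      intro a
      have hia := (e a).isLt
      by_cases hiq : (e a : ℕ) < q
      · right
        rw [hnone]
        have h1 := hDle2 _ hiq
        exact ⟨hiq, by omega⟩
      · left
        rw [hsome2]
        have h1 := hDtop _ (le_of_not_gt hiq)
        exact ⟨by omega, by omega⟩
    · -- tight
      have hmm : m - 1 < m := by omega
      have hbidx : (e (e.symm (⟨m - 1, hmm⟩ : Fin m)) : ℕ) = m - 1 := by simp
      refine ⟨e.symm ⟨m - 1, hmm⟩, ?_, ?_⟩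
      · intro hc
        rw [hsome2, hbidx] at hc
        have h3 := hDtop (m - 1) (by omega)
        omega
      · intro hc
        rw [hnone, hbidx] at hc
        omega
  have hSurvIff : ∀ a : A, a ∈ Survivors I ρ' L' ↔ q ≤ (e a : ℕ) := by
    intro a
    have hia := (e a).isLt
    constructor
    · intro hc
      have hc' : ρ' a L' = some I.t := hc
      obtain ⟨h1, h2⟩ := (hsome2 _ _ _).mp hc'
      by_contra hq'
      push_neg at hq'
      have h3 := hDle2 _ hq'
      omega
    · intro hq'
      show ρ' a L' = some I.t
      rw [hsome2]
      have h1 := hDtop _ hq'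
      exact ⟨by omega, by omega⟩
  have hcard : m - q ≤ (Survivors I ρ' L').ncard := by
    have hEq : Survivors I ρ' L' = e.symm '' {i : Fin m | q ≤ (i : ℕ)} := by
      ext a
      rw [Set.mem_image]
      constructor
      · intro h
        exact ⟨e a, (hSurvIff a).mp h, e.symm_apply_apply a⟩
      · rintro ⟨i, hi, rfl⟩
        rw [hSurvIff]
        simpa using (show q ≤ (i : ℕ) from hi)
    rw [hEq, Set.ncard_image_of_injective _ e.symm.injective]
    have hqlt : q < m := by omega
    have h2 : {i : Fin m | q ≤ (i : ℕ)} = ↑(Finset.Ici (⟨q, hqlt⟩ : Fin m)) := by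
      ext i
      simp [Finset.mem_Ici, Fin.le_def]
    have h3 : (Finset.Ici (⟨q, hqlt⟩ : Fin m)).card = m - q := by
      rw [Fin.card_Ici]
    exact le_of_eq (by rw [h2, Set.ncard_coe_finset, h3])
  have hmono : ∀ (a : A) (j : ℕ),
      ρ' a (j + 1) = ρ' a j ∨
      (∃ v w : Fin n, ρ' a j = some v ∧ ρ' a (j + 1) = some w ∧
        (w : ℕ) = (v : ℕ) + 1) ∨
      ρ' a (j + 1) = none := by
    intro a j
    by_cases hd : ρ' a (j + 1) = none
    · right; right; exact hd
    obtain ⟨w, hw⟩ := Option.ne_none_iff_exists'.mp hd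
    obtain ⟨h1, h2⟩ := (hsome2 _ _ _).mp hw
    have h1' : ¬((e a : ℕ) < q ∧ (e a : ℕ) + D (e a : ℕ) < j) := by omega
    have hv : ρ' a j = some ⟨min (j - (e a : ℕ)) (D (e a : ℕ)),
        lt_of_le_of_lt (min_le_right _ _) (hDlt _)⟩ :=
      (hsome2 _ _ _).mpr ⟨h1', rfl⟩
    by_cases hxy : min (j - (e a : ℕ)) (D (e a : ℕ)) =
        min (j + 1 - (e a : ℕ)) (D (e a : ℕ))
    · left
      rw [hw, hv]
      congr 1
      apply Fin.ext
      show (w : ℕ) = min (j - (e a : ℕ)) (D (e a : ℕ))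
      omega
    · right; left
      refine ⟨_, w, hv, hw, ?_⟩
      show (w : ℕ) = min (j - (e a : ℕ)) (D (e a : ℕ)) + 1
      omega
  exact ⟨ρ', L', hvalid, by omega, hmono⟩

/-- **no returns on path topologies.**
If the topology is the path `v_1, …, v_n` with `s = v_1` and `t = v_n` and the
instance admits a valid plan with at least `k` surviving assets, then it admits
a valid plan with at least `k` surviving assets in which no asset ever moves
backward: at every timestep each asset waits, moves one step toward `t`, or is
eliminated. -/
theorem path_no_returns {A : Type} [Fintype A] {n : ℕ} (hn : 2 ≤ n)
    (I : RPInstance (Fin n)) (hG : I.G = pathGraph n)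
    (hs : (I.s : ℕ) = 0) (ht : (I.t : ℕ) = n - 1) (k : ℕ)
    (h : ∃ (ρ : A → ℕ → Option (Fin n)) (L : ℕ),
      IsValidPlan I ρ L ∧ k ≤ (Survivors I ρ L).ncard) :
    ∃ (ρ' : A → ℕ → Option (Fin n)) (L' : ℕ),
      IsValidPlan I ρ' L' ∧ k ≤ (Survivors I ρ' L').ncard ∧
      ∀ (a : A) (j : ℕ),
        ρ' a (j + 1) = ρ' a j ∨
        (∃ v w : Fin n, ρ' a j = some v ∧ ρ' a (j + 1) = some w ∧
          (w : ℕ) = (v : ℕ) + 1) ∨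
        ρ' a (j + 1) = none := by
  classical
  obtain ⟨ρ, L, hv, hk⟩ := h
  obtain ⟨a0, -, -⟩ := hv.tight
  rcases Nat.eq_zero_or_pos k with rfl | hk1
  · obtain ⟨ρ', L', h1, h3⟩ := trivial_plan ⟨a0⟩ hn I
    exact ⟨ρ', L', h1, Nat.zero_le _, h3⟩
  · have hSne : (Survivors I ρ L).Nonempty :=
      Set.nonempty_of_ncard_ne_zero (by omega)
    have hcount := count_bound hn I hG hs ht hv hSne
    have hm : I.R.ncard + 1 ≤ Fintype.card A := by omega
    obtain ⟨ρ', L', h1, h2, h3⟩ := convoy hn I hG hs ht hm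
    exact ⟨ρ', L', h1, by omega, h3⟩
end

section
/- Let I = (G, s, t, R, c, A, k) be a Routing Plan instance such that G ∖ {s,t} is a disjoint union of paths P_1, …, P_ℓ. For each i ∈ {1,…,ℓ} and each b ∈ {0,1,…,m}, let OPT_i(b) denote the maximum number of surviving assets over all valid plans for the instance with topology G[V(P_i) ∪ {s,t}] (with the inherited traps and reload times) and b assets. Then the maximum number of surviving assets over all valid plans for I with m assets equals the maximum of OPT_1(b_1) + ⋯ + OPT_ℓ(b_ℓ) over all nonnegative integers b_1, …, b_ℓ with b_1 + ⋯ + b_ℓ = m. -/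
/-- The maximum number of surviving assets over all valid plans of instance `I`
with asset set `A`. -/
noncomputable def maxSurvivors {V : Type} (I : RPInstance V) (A : Type) : ℕ :=
  sSup {N : ℕ | ∃ (ρ : A → ℕ → Option V) (L : ℕ),
    IsValidPlan I ρ L ∧ (Survivors I ρ L).ncard = N}

/-- The sub-instance of `I` induced on a set `V'` of vertices containing `s`
and `t`, with the inherited traps and reload times. -/
def RPInstance.restrict {V : Type} (I : RPInstance V) (V' : Set V)
    (hs : I.s ∈ V') (ht : I.t ∈ V') : RPInstance V' where
  G := I.G.induce V'
  s := ⟨I.s, hs⟩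
  t := ⟨I.t, ht⟩
  R := {v : V' | (v : V) ∈ I.R}
  c := fun v => I.c (v : V)
  s_ne_t := fun h => I.s_ne_t (congrArg Subtype.val h)
  s_not_trap := I.s_not_trap
  t_not_trap := I.t_not_trap
  c_pos := fun r hr => I.c_pos (r : V) hr

/-- The set `P` of vertices induces a path in `G`: its vertices can be
enumerated as `e 0, e 1, …` so that two vertices of `P` are adjacent in `G`
exactly when they are consecutive in the enumeration. -/
def InducesPath {V : Type} (G : SimpleGraph V) (P : Set V) : Prop :=
  ∃ e : Fin P.ncard → V,
    (∀ i, e i ∈ P) ∧ (∀ v ∈ P, ∃! i, e i = v) ∧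
    ∀ i j : Fin P.ncard, G.Adj (e i) (e j) ↔ ((i : ℕ) + 1 = j ∨ (j : ℕ) + 1 = i)

section Aux

variable {V A : Type}

/-- A weak plan: the validity conditions minus progress and tightness. -/
structure IsWeakPlan (I : RPInstance V) (ρ : A → ℕ → Option V) (L : ℕ) : Prop where
  start : ∀ a, ρ a 0 = some I.s
  no_return : ∀ a j, ρ a (j + 1) = some I.s → ρ a j = some I.s
  stay_end : ∀ a j, (ρ a j = some I.t ∨ ρ a j = none) → ρ a (j + 1) = ρ a j
  move : ∀ a j v, ρ a (j + 1) = some v → ∃ u, ρ a j = some u ∧ (u = v ∨ I.G.Adj u v)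
  no_collision : ∀ a a', a ≠ a' → ∀ j, ρ a j = ρ a' j →
    ρ a j = some I.s ∨ ρ a j = some I.t ∨ ρ a j = none
  trap_kill : ∀ a j r, r ∈ I.R → ρ a j = some r → TrapActive I ρ r j → ρ a (j + 1) = none
  finished : ∀ a, ρ a L = some I.t ∨ ρ a L = none

theorem IsValidPlan.weak {I : RPInstance V} {ρ : A → ℕ → Option V} {L : ℕ}
    (h : IsValidPlan I ρ L) : IsWeakPlan I ρ L :=
  ⟨h.start, h.no_return, h.stay_end, h.move, h.no_collision, h.trap_kill, h.finished⟩

namespace IsWeakPlan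

variable {I : RPInstance V} {ρ : A → ℕ → Option V} {L : ℕ}

theorem settled_le (h : IsWeakPlan I ρ L) (a : A) {j j' : ℕ} (hle : j ≤ j')
    (hj : ρ a j = some I.t ∨ ρ a j = none) : ρ a j' = ρ a j := by
  obtain ⟨d, rfl⟩ := Nat.exists_eq_add_of_le hle
  clear hle
  induction d with
  | zero => rfl
  | succ d ih =>
    have := h.stay_end a (j + d) (by rw [ih]; exact hj)
    rw [← Nat.add_assoc, this, ih]

theorem s_prefix (h : IsWeakPlan I ρ L) (a : A) {j j' : ℕ} (hle : j' ≤ j)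
    (hj : ρ a j = some I.s) : ρ a j' = some I.s := by
  obtain ⟨d, rfl⟩ := Nat.exists_eq_add_of_le hle
  clear hle
  induction d with
  | zero => exact hj
  | succ d ih =>
    exact ih (h.no_return a (j' + d) (by rw [← Nat.add_assoc] at hj; exact hj))

theorem length_pos [Nonempty A] (h : IsWeakPlan I ρ L) : 1 ≤ L := by
  rcases Nat.eq_zero_or_pos L with hL | hL
  · obtain a := Classical.arbitrary A
    have h0 := h.start a
    rcases h.finished a with ht | ht <;> rw [hL] at ht <;> rw [h0] at ht
    · exact absurd (Option.some_injective _ ht) I.s_ne_t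
    · exact absurd ht (by simp)
  · exact hL

end IsWeakPlan

/-- Compression: from a weak plan one can obtain a valid plan with the same
set of survivors (assuming there is at least one asset). -/
theorem IsWeakPlan.to_valid [Nonempty A] {I : RPInstance V} :
    ∀ (L : ℕ) (ρ : A → ℕ → Option V), IsWeakPlan I ρ L →
    ∃ (ρ' : A → ℕ → Option V) (L' : ℕ), IsValidPlan I ρ' L' ∧
      Survivors I ρ' L' = Survivors I ρ L := by
  intro L
  induction L using Nat.strong_induction_on with
  | _ L IH =>
  intro ρ h
  by_cases hid : ∃ j < L, ∀ a, ρ a (j + 1) = ρ a j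
  · obtain ⟨j, hjL, hstep⟩ := hid
    set ρ' : A → ℕ → Option V := fun a k => if k ≤ j then ρ a k else ρ a (k + 1) with hρ'
    have hval : ∀ a k, ρ' a k = ρ a (if k ≤ j then k else k + 1) := by
      intro a k; by_cases hk : k ≤ j <;> simp [hρ', hk]
    have hw : IsWeakPlan I ρ' (L - 1) := by
      constructor
      · intro a; rw [hval]; simpa using h.start a
      · -- no_return
        intro a k hk
        rw [hval] at hk ⊢
        by_cases h1 : k + 1 ≤ j
        · simp only [h1, if_pos (by omega : k ≤ j)] at hk ⊢
          exact h.no_return a k hk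
        · by_cases h2 : k ≤ j
          · -- k = j
            simp only [h1, if_neg h1, if_pos h2, if_true] at hk ⊢
            have := h.no_return a (k + 1) hk
            have hkj : k = j := by omega
            rw [hkj] at this ⊢; rw [← hstep a]; exact this
          · simp only [if_neg h1, if_neg h2] at hk ⊢
            exact h.no_return a (k + 1) hk
      · -- stay_end
        intro a k hk
        rw [hval] at hk ⊢; rw [hval]
        by_cases h1 : k + 1 ≤ j
        · simp only [if_pos h1, if_pos (by omega : k ≤ j)] at hk ⊢
          exact h.stay_end a k hk
        · by_cases h2 : k ≤ j
          · simp only [if_neg h1, if_pos h2] at hk ⊢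
            have hkj : k = j := by omega
            subst hkj
            have e1 := h.stay_end a k hk
            have e2 := h.stay_end a (k + 1) (by rw [e1]; exact hk)
            rw [e2, e1]
          · simp only [if_neg h1, if_neg h2] at hk ⊢
            exact h.stay_end a (k + 1) hk
      · -- move
        intro a k v hk
        rw [hval] at hk
        rw [hval]
        by_cases h1 : k + 1 ≤ j
        · rw [if_pos h1] at hk
          rw [if_pos (by omega : k ≤ j)]
          exact h.move a k v hk
        · rw [if_neg h1] at hk
          obtain ⟨u, hu, hadj⟩ := h.move a (k + 1) v hk
          by_cases h2 : k ≤ j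
          · rw [if_pos h2]
            have hkj : k = j := by omega
            rw [hkj, ← hstep a, ← hkj]
            exact ⟨u, hu, hadj⟩
          · rw [if_neg h2]
            exact ⟨u, hu, hadj⟩
      · -- no_collision
        intro a a' hne k heq
        rw [hval, hval] at heq
        rw [hval]
        exact h.no_collision a a' hne _ heq
      · -- trap_kill
        intro a k r hr hak hact'
        rw [hval] at hak
        have hact : TrapActive I ρ r (if k ≤ j then k else k + 1) := by
          intro a'' ℓ h1 hc hocc
          by_cases h2 : k ≤ j
          · rw [if_pos h2] at hocc
            exact hact' a'' ℓ h1 hc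
              (by rw [hval, if_pos (by omega : k - ℓ ≤ j)]; exact hocc)
          · rw [if_neg h2] at hocc
            by_cases h3 : k + 1 - ℓ ≤ j
            · have hℓ2 : 2 ≤ ℓ := by omega
              apply hact' a'' (ℓ - 1) (by omega) (by omega)
              rw [hval, if_pos (by omega : k - (ℓ - 1) ≤ j),
                (by omega : k - (ℓ - 1) = k + 1 - ℓ)]
              exact hocc
            · by_cases h4 : k + 1 - ℓ = j + 1
              · apply hact' a'' ℓ h1 hc
                rw [hval, (by omega : k - ℓ = j), if_pos le_rfl, ← hstep a'',
                  (by omega : j + 1 = k + 1 - ℓ)]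
                exact hocc
              · have h5 : j + 2 ≤ k + 1 - ℓ := by omega
                apply hact' a'' ℓ h1 hc
                rw [hval, if_neg (by omega : ¬ k - ℓ ≤ j),
                  (by omega : k - ℓ + 1 = k + 1 - ℓ)]
                exact hocc
        have hkill := h.trap_kill a (if k ≤ j then k else k + 1) r hr hak hact
        rw [hval]
        by_cases h1 : k + 1 ≤ j
        · rw [if_pos h1]
          rw [if_pos (by omega : k ≤ j)] at hkill
          exact hkill
        · rw [if_neg h1]
          by_cases h2 : k ≤ j
          · exfalso
            rw [if_pos h2] at hkill hak
            have hkj : k = j := by omega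
            have hx := hstep a
            rw [← hkj, hkill, hak] at hx
            cases hx
          · rw [if_neg h2] at hkill
            exact hkill
      · -- finished
        intro a
        rw [hval]
        by_cases h1 : L - 1 ≤ j
        · rw [if_pos h1]
          have hj1 : j = L - 1 := by omega
          have hL1 : j + 1 = L := by omega
          have hx := hstep a
          rw [hL1, hj1] at hx
          rw [← hx]
          exact h.finished a
        · rw [if_neg h1, (by omega : L - 1 + 1 = L)]
          exact h.finished a
    have hs' : Survivors I ρ' (L - 1) = Survivors I ρ L := by
      ext a
      simp only [Survivors, Set.mem_setOf_eq]
      rw [hval]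
      by_cases h1 : L - 1 ≤ j
      · rw [if_pos h1]
        have hj1 : j = L - 1 := by omega
        have hL1 : j + 1 = L := by omega
        have hx := hstep a
        rw [hL1, hj1] at hx
        rw [hx]
      · rw [if_neg h1, (by omega : L - 1 + 1 = L)]
    obtain ⟨ρ'', L'', hv, hsv⟩ := IH (L - 1) (by omega) ρ' hw
    exact ⟨ρ'', L'', hv, by rw [hsv, hs']⟩
  · push_neg at hid
    refine ⟨ρ, L, ⟨h.start, h.no_return, h.stay_end, h.move, h.no_collision,
      h.trap_kill, ?_, h.finished, ?_⟩, rfl⟩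
    · intro k hk
      rcases Nat.lt_or_ge k L with hkL | hkL
      · exact hid k hkL
      · exfalso
        obtain ⟨a, ha1, ha2⟩ := hk
        have hset := h.settled_le a hkL (h.finished a)
        rcases h.finished a with hf | hf <;> rw [hf] at hset
        · exact ha1 hset
        · exact ha2 hset
    · by_contra hcon
      push_neg at hcon
      have hL := h.length_pos
      obtain ⟨a, ha⟩ := hid (L - 1) (by omega)
      have hset : ρ a (L - 1) = some I.t ∨ ρ a (L - 1) = none := by
        by_cases hx : ρ a (L - 1) = some I.t
        · exact Or.inl hx
        · exact Or.inr (hcon a hx)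
      exact ha (h.stay_end a (L - 1) hset)

theorem natSSup_le {s : Set ℕ} {m : ℕ} (h : ∀ n ∈ s, n ≤ m) : sSup s ≤ m := by
  rcases s.eq_empty_or_nonempty with rfl | hne
  · rw [csSup_empty]; exact Nat.zero_le m
  · exact csSup_le hne h

theorem survivors_ncard_le [Fintype A] (I : RPInstance V) (ρ : A → ℕ → Option V) (L : ℕ) :
    (Survivors I ρ L).ncard ≤ Fintype.card A := by
  have := Set.ncard_le_ncard (Set.subset_univ (Survivors I ρ L)) Set.finite_univ
  simpa [Set.ncard_univ, Nat.card_eq_fintype_card] using this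

theorem bddAbove_planSet [Fintype A] (I : RPInstance V) :
    BddAbove {N : ℕ | ∃ (ρ : A → ℕ → Option V) (L : ℕ),
      IsValidPlan I ρ L ∧ (Survivors I ρ L).ncard = N} := by
  refine ⟨Fintype.card A, fun N hN => ?_⟩
  obtain ⟨ρ, L, _, rfl⟩ := hN
  exact survivors_ncard_le I ρ L

theorem maxSurvivors_le_card [Fintype A] (I : RPInstance V) :
    maxSurvivors I A ≤ Fintype.card A := by
  apply natSSup_le
  rintro N ⟨ρ, L, _, rfl⟩
  exact survivors_ncard_le I ρ L

theorem not_validPlan_of_isEmpty [IsEmpty A] {I : RPInstance V} {ρ : A → ℕ → Option V} {L : ℕ}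
    (h : IsValidPlan I ρ L) : False := by
  obtain ⟨a, -⟩ := h.tight
  exact IsEmpty.false a

theorem maxSurvivors_of_isEmpty [IsEmpty A] (I : RPInstance V) : maxSurvivors I A = 0 := by
  unfold maxSurvivors
  convert (csSup_empty : sSup (∅ : Set ℕ) = ⊥) using 2
  · exact rfl
  rw [Set.eq_empty_iff_forall_notMem]
  rintro N ⟨ρ, L, hv, -⟩
  exact not_validPlan_of_isEmpty hv
  exact rfl

theorem IsValidPlan.unsettled {I : RPInstance V} {ρ : A → ℕ → Option V} {L : ℕ}
    (hv : IsValidPlan I ρ L) {j : ℕ} (hj : j < L) :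
    ∃ a, ρ a j ≠ some I.t ∧ ρ a j ≠ none := by
  obtain ⟨a, h1, h2⟩ := hv.tight
  refine ⟨a, fun hx => ?_, fun hx => ?_⟩ <;>
  · have hle : j ≤ L - 1 := by omega
    have := hv.weak.settled_le a hle (by rw [hx]; simp)
    rw [hx] at this
    first
    | exact h1 this
    | exact h2 this

/-! ### Moving between an instance and a sub-instance -/

open scoped Classical in
noncomputable def toSub (V' : Set V) (o : Option V) : Option ↥V' :=
  o.bind fun v => if h : v ∈ V' then some ⟨v, h⟩ else none

@[simp] theorem toSub_none (V' : Set V) : toSub V' none = none := rfl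

theorem toSub_some {V' : Set V} {v : V} (h : v ∈ V') : toSub V' (some v) = some ⟨v, h⟩ := by
  simp [toSub, h]

theorem toSub_eq_some {V' : Set V} {o : Option V} {x : ↥V'} (h : toSub V' o = some x) :
    o = some (x : V) := by
  classical
  cases o with
  | none => simp [toSub] at h
  | some v =>
    rw [show toSub V' (some v) = if h : v ∈ V' then some ⟨v, h⟩ else none from rfl] at h
    split at h
    · cases h; rfl
    · cases h

theorem toSub_eq_none {V' : Set V} {o : Option V} (hm : ∀ v, o = some v → v ∈ V')
    (h : toSub V' o = none) : o = none := by
  cases o with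
  | none => rfl
  | some v => rw [toSub_some (hm v rfl)] at h; cases h

theorem toSub_inj {V' : Set V} {o o' : Option V} (hm : ∀ v, o = some v → v ∈ V')
    (hm' : ∀ v, o' = some v → v ∈ V') (h : toSub V' o = toSub V' o') : o = o' := by
  cases ho : o with
  | none =>
    rw [ho] at h
    exact (toSub_eq_none hm' h.symm).symm
  | some v =>
    rw [ho, toSub_some (hm v ho)] at h
    rw [toSub_eq_some h.symm]

/-! ### Trajectories stay in a single path -/

theorem exists_traj {ℓ : ℕ} (hℓ : 1 ≤ ℓ) {I : RPInstance V} (P : Fin ℓ → Set V)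
    (hcover : ∀ v : V, v ≠ I.s → v ≠ I.t → ∃! i : Fin ℓ, v ∈ P i)
    (hst : ∀ i : Fin ℓ, I.s ∉ P i ∧ I.t ∉ P i)
    (hsep : ∀ i j : Fin ℓ, i ≠ j → ∀ u ∈ P i, ∀ w ∈ P j, ¬ I.G.Adj u w)
    {ρ : A → ℕ → Option V} {L : ℕ} (h : IsWeakPlan I ρ L) (a : A) :
    ∃ i : Fin ℓ, ∀ j v, ρ a j = some v → v = I.s ∨ v = I.t ∨ v ∈ P i := by
  classical
  by_cases hA : ∀ j v, ρ a j = some v → v = I.s ∨ v = I.t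
  · exact ⟨⟨0, hℓ⟩, fun j v hv => (hA j v hv).imp id Or.inl⟩
  · push_neg at hA
    obtain ⟨j0, v0, hv0, hv0s, hv0t⟩ := hA
    have hex : ∃ j, ∃ v, ρ a j = some v ∧ v ≠ I.s ∧ v ≠ I.t := ⟨j0, v0, hv0, hv0s, hv0t⟩
    obtain ⟨v1, hv1, hv1s, hv1t⟩ := Nat.find_spec hex
    obtain ⟨i, hi, -⟩ := hcover v1 hv1s hv1t
    refine ⟨i, ?_⟩
    have fwd : ∀ d w, ρ a (Nat.find hex + d) = some w → w = I.t ∨ w ∈ P i := by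
      intro d
      induction d with
      | zero =>
        intro w hw
        rw [Nat.add_zero, hv1] at hw
        cases hw
        exact Or.inr hi
      | succ d ih =>
        intro w hw
        rw [← Nat.add_assoc] at hw
        obtain ⟨u, hu, huw⟩ := h.move a (Nat.find hex + d) w hw
        rcases ih u hu with rfl | hup
        · have hse := h.stay_end a (Nat.find hex + d) (Or.inl hu)
          rw [hse, hu] at hw
          cases hw
          exact Or.inl rfl
        · rcases huw with rfl | hadj
          · exact Or.inr hup
          · by_cases hws : w = I.s
            · subst hws
            
              have := h.no_return a (Nat.find hex + d) hw
              rw [this] at hu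
              cases hu
              exact absurd hup (hst i).1
            · by_cases hwt : w = I.t
              · exact Or.inl hwt
              · obtain ⟨i', hi', -⟩ := hcover w hws hwt
                rcases eq_or_ne i' i with rfl | hne
                · exact Or.inr hi'
                · exact absurd hadj (hsep i i' (Ne.symm hne) u hup w hi')
    intro j v hv
    rcases Nat.lt_or_ge j (Nat.find hex) with hj | hj
    · by_cases hvs : v = I.s
      · exact Or.inl hvs
      · by_cases hvt : v = I.t
        · exact Or.inr (Or.inl hvt)
        · exact absurd ⟨v, hv, hvs, hvt⟩ (Nat.find_min hex hj)
    · obtain ⟨d, rfl⟩ := Nat.exists_eq_add_of_le hj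
      exact Or.inr (fwd d v hv)

end Aux

/-! ### Counting helpers -/

theorem ncard_fiber_sum {A : Type} [Fintype A] {ℓ : ℕ} (g : A → Fin ℓ) (s : Set A) :
    ∑ i, {a | g a = i ∧ a ∈ s}.ncard = s.ncard := by
  classical
  have h1 : ∀ i, {a | g a = i ∧ a ∈ s}.ncard = (s.toFinset.filter (fun a => g a = i)).card := by
    intro i
    rw [Set.ncard_eq_toFinset_card']
    congr 1
    ext a
    simp [and_comm]
  simp_rw [h1]
  rw [← Finset.card_eq_sum_card_fiberwise (fun a _ => Finset.mem_univ (g a)),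
    Set.ncard_eq_toFinset_card']

theorem ncard_sigma {ℓ : ℕ} {β : Fin ℓ → Type} [∀ i, Fintype (β i)] (s : ∀ i, Set (β i)) :
    {x : Σ i, β i | x.2 ∈ s x.1}.ncard = ∑ i, (s i).ncard := by
  classical
  have e : {x : Σ i, β i | x.2 ∈ s x.1} ≃ Σ i, ↥(s i) :=
    { toFun := fun x => ⟨x.1.1, ⟨x.1.2, x.2⟩⟩
      invFun := fun y => ⟨⟨y.1, y.2.1⟩, y.2.2⟩
      left_inv := fun x => rfl
      right_inv := fun y => rfl }
  rw [← Nat.card_coe_set_eq, Nat.card_congr e, Nat.card_eq_fintype_card,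
    Fintype.card_sigma]
  congr 1
  ext i
  rw [← Nat.card_coe_set_eq, Nat.card_eq_fintype_card]

theorem range_sum_cover (f : ℕ → ℕ) (m j : ℕ) (hj : j < ∑ k ∈ Finset.range m, f k) :
    ∃ n < m, (∑ k ∈ Finset.range n, f k) ≤ j ∧ j < (∑ k ∈ Finset.range n, f k) + f n := by
  induction m with
  | zero => simp at hj
  | succ m ih =>
    rcases Nat.lt_or_ge j (∑ k ∈ Finset.range m, f k) with h | h
    · obtain ⟨n, h1, h2, h3⟩ := ih h
      exact ⟨n, by omega, h2, h3⟩
    · exact ⟨m, by omega, h, by rwa [Finset.sum_range_succ] at hj⟩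

/-! ### Transporting a plan along an equivalence of assets -/

theorem IsValidPlan.comp_equiv {A B : Type} (E : A ≃ B) {I : RPInstance V}
    {ρ : B → ℕ → Option V} {L : ℕ} (h : IsValidPlan I ρ L) :
    IsValidPlan I (fun a => ρ (E a)) L := by
  constructor
  · exact fun a => h.start (E a)
  · exact fun a j => h.no_return (E a) j
  · exact fun a j => h.stay_end (E a) j
  · exact fun a j v => h.move (E a) j v
  · exact fun a a' hne j => h.no_collision (E a) (E a') (fun hx => hne (E.injective hx)) j
  · intro a j r hr hj hact
    refine h.trap_kill (E a) j r hr hj ?_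
    intro b ℓ h1 h2
    simpa using hact (E.symm b) ℓ h1 h2
  · intro j hj
    obtain ⟨a, ha⟩ := hj
    obtain ⟨a', ha'⟩ := h.progress j ⟨E a, ha⟩
    exact ⟨E.symm a', by simpa using ha'⟩
  · exact fun a => h.finished (E a)
  · obtain ⟨a, ha⟩ := h.tight
    exact ⟨E.symm a, by simpa using ha⟩

theorem survivors_comp_equiv {A B : Type} (E : A ≃ B) (I : RPInstance V)
    (ρ : B → ℕ → Option V) (L : ℕ) :
    (Survivors I (fun a => ρ (E a)) L).ncard = (Survivors I ρ L).ncard := by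
  have : Survivors I (fun a => ρ (E a)) L = E.symm '' (Survivors I ρ L) := by
    ext a
    simp only [Survivors, Set.mem_setOf_eq, Set.mem_image]
    constructor
    · intro hx
      exact ⟨E a, hx, E.symm_apply_apply a⟩
    · rintro ⟨b, hb, rfl⟩
      simpa using hb
  rw [this, Set.ncard_image_of_injective _ E.symm.injective]

theorem dir1 {V A : Type} [Fintype V] [Fintype A]
    (I : RPInstance V) (ℓ : ℕ) (hℓ : 1 ≤ ℓ) (P : Fin ℓ → Set V)
    (hcover : ∀ v : V, v ≠ I.s → v ≠ I.t → ∃! i : Fin ℓ, v ∈ P i)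
    (hst : ∀ i : Fin ℓ, I.s ∉ P i ∧ I.t ∉ P i)
    (hsep : ∀ i j : Fin ℓ, i ≠ j → ∀ u ∈ P i, ∀ w ∈ P j, ¬ I.G.Adj u w) :
    maxSurvivors I A ≤
      sSup {N : ℕ | ∃ b : Fin ℓ → ℕ, (∑ i, b i) = Fintype.card A ∧
        N = ∑ i, maxSurvivors
          (I.restrict (P i ∪ {I.s, I.t}) (by simp) (by simp)) (Fin (b i))} := by
  classical
  apply natSSup_le
  rintro N ⟨ρ, L, hv, rfl⟩
  have hw := hv.weak
  choose g hg using fun a => exists_traj hℓ P hcover hst hsep hw a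
  set b : Fin ℓ → ℕ := fun i => Fintype.card {a // g a = i} with hb
  have hbsum : (∑ i, b i) = Fintype.card A := by
    rw [← Fintype.card_sigma]
    exact Fintype.card_congr (Equiv.sigmaFiberEquiv g)
  have hsV : ∀ i, I.s ∈ P i ∪ {I.s, I.t} := fun i => by simp
  have htV : ∀ i, I.t ∈ P i ∪ {I.s, I.t} := fun i => by simp
  set V' : Fin ℓ → Set V := fun i => P i ∪ {I.s, I.t} with hV'
  set Ii : (i : Fin ℓ) → RPInstance ↥(V' i) :=
    fun i => I.restrict (P i ∪ {I.s, I.t}) (hsV i) (htV i) with hIi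
  have hmem : ∀ (i : Fin ℓ) (a : A), g a = i → ∀ j v, ρ a j = some v → v ∈ V' i := by
    intro i a hga j v hvv
    rcases hg a j v hvv with rfl | rfl | hP
    · exact hsV i
    · exact htV i
    · rw [← hga]; exact Or.inl hP
  set e : (i : Fin ℓ) → Fin (b i) ≃ {a // g a = i} :=
    fun i => (Fintype.equivFin {a // g a = i}).symm with he
  set ρs : (i : Fin ℓ) → Fin (b i) → ℕ → Option ↥(V' i) :=
    fun i ι j => toSub (V' i) (ρ (e i ι) j) with hρs
  have hmem' : ∀ (i : Fin ℓ) (ι : Fin (b i)) (j : ℕ) (v : V),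
      ρ ((e i ι) : A) j = some v → v ∈ V' i :=
    fun i ι j v hvv => hmem i (e i ι) (e i ι).2 j v hvv
  have hts : ∀ i : Fin ℓ, toSub (V' i) (some I.s) = some (Ii i).s :=
    fun i => by rw [toSub_some (hsV i)]; exact congrArg some (Subtype.ext rfl)
  have htt : ∀ i : Fin ℓ, toSub (V' i) (some I.t) = some (Ii i).t :=
    fun i => by rw [toSub_some (htV i)]; exact congrArg some (Subtype.ext rfl)
  have hweak : ∀ i, IsWeakPlan (Ii i) (ρs i) L := by
    intro i
    constructor
    · intro ι
      show toSub (V' i) (ρ (e i ι) 0) = some (Ii i).s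
      rw [hw.start (e i ι), hts i]
    · intro ι j hj
      replace hj := toSub_eq_some hj
      have := hw.no_return (e i ι) j hj
      show toSub (V' i) (ρ (e i ι) j) = some (Ii i).s
      rw [this, hts i]
    · intro ι j hj
      have hj' : ρ ((e i ι) : A) j = some I.t ∨ ρ ((e i ι) : A) j = none := by
        rcases hj with hj | hj
        · exact Or.inl (toSub_eq_some hj)
        · exact Or.inr (toSub_eq_none (hmem' i ι j) hj)
      have := hw.stay_end (e i ι) j hj'
      show toSub (V' i) (ρ (e i ι) (j + 1)) = toSub (V' i) (ρ (e i ι) j)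
      rw [this]
    · intro ι j vv hj
      replace hj := toSub_eq_some hj
      obtain ⟨u, hu, huv⟩ := hw.move (e i ι) j (vv : V) hj
      have hum : u ∈ V' i := hmem' i ι j u hu
      refine ⟨⟨u, hum⟩, ?_, ?_⟩
      · show toSub (V' i) (ρ (e i ι) j) = some ⟨u, hum⟩
        rw [hu, toSub_some hum]
      · rcases huv with rfl | hadj
        · exact Or.inl (Subtype.ext rfl)
        · exact Or.inr hadj
    · intro ι ι' hne j heq
      have hne' : ((e i ι) : A) ≠ ((e i ι') : A) := by
        intro hx
        exact hne ((e i).injective (Subtype.val_injective hx))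
      have heq' : ρ ((e i ι) : A) j = ρ ((e i ι') : A) j :=
        toSub_inj (hmem' i ι j) (hmem' i ι' j) heq
      rcases hw.no_collision (e i ι) (e i ι') hne' j heq' with hx | hx | hx
      · refine Or.inl ?_
        show toSub (V' i) (ρ (e i ι) j) = some (Ii i).s
        rw [hx, hts i]
      · refine Or.inr (Or.inl ?_)
        show toSub (V' i) (ρ (e i ι) j) = some (Ii i).t
        rw [hx, htt i]
      · refine Or.inr (Or.inr ?_)
        show toSub (V' i) (ρ (e i ι) j) = none
        rw [hx, toSub_none]
    · intro ι j rr hrr hocc hact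
      replace hocc := toSub_eq_some hocc
      have hrV : (rr : V) ∈ I.R := hrr
      have hrs : (rr : V) ≠ I.s := fun hx => I.s_not_trap (hx ▸ hrV)
      have hrt : (rr : V) ≠ I.t := fun hx => I.t_not_trap (hx ▸ hrV)
      have hrP : (rr : V) ∈ P i := by
        rcases rr.2 with hP | hP
        · exact hP
        · rcases hP with hP | hP
          · exact absurd hP hrs
          · exact absurd hP hrt
      have hfull : TrapActive I ρ (rr : V) j := by
        intro a'' ℓℓ h1 hc hocc''
        rcases eq_or_ne (g a'') i with hgi | hgi
        · have hι'' := hact ((e i).symm ⟨a'', hgi⟩) ℓℓ h1 hc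
          apply hι''
          show toSub (V' i) (ρ ((e i ((e i).symm ⟨a'', hgi⟩)) : A) (j - ℓℓ)) = some rr
          rw [Equiv.apply_symm_apply]
          show toSub (V' i) (ρ a'' (j - ℓℓ)) = some rr
          rw [hocc'', toSub_some rr.2]
        · rcases hg a'' (j - ℓℓ) (rr : V) hocc'' with hx | hx | hx
          · exact hrs hx
          · exact hrt hx
          · obtain ⟨iu, hiu, huniq⟩ := hcover (rr : V) hrs hrt
            exact hgi ((huniq (g a'') hx).trans (huniq i hrP).symm)
      have hkill := hw.trap_kill (e i ι) j (rr : V) hrV hocc hfull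
      show toSub (V' i) (ρ ((e i ι) : A) (j + 1)) = none
      rw [hkill, toSub_none]
    · intro ι
      rcases hw.finished (e i ι) with hx | hx
      · refine Or.inl ?_
        show toSub (V' i) (ρ ((e i ι) : A) L) = some (Ii i).t
        rw [hx, htt i]
      · refine Or.inr ?_
        show toSub (V' i) (ρ ((e i ι) : A) L) = none
        rw [hx, toSub_none]
  -- identify the survivors of the sub-plans
  have hsurv : ∀ i, Survivors (Ii i) (ρs i) L =
      {ι : Fin (b i) | ((e i ι) : A) ∈ Survivors I ρ L} := by
    intro i
    ext ι
    simp only [Survivors, Set.mem_setOf_eq]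
    constructor
    · intro hx
      exact toSub_eq_some hx
    · intro hx
      show toSub (V' i) (ρ ((e i ι) : A) L) = some (Ii i).t
      rw [hx, htt i]
  -- counting
  have himg : ∀ i, (Survivors (Ii i) (ρs i) L).ncard
      = {a | g a = i ∧ a ∈ Survivors I ρ L}.ncard := by
    intro i
    rw [hsurv i]
    have : (fun ι : Fin (b i) => ((e i ι) : A)) ''
        {ι : Fin (b i) | ((e i ι) : A) ∈ Survivors I ρ L}
        = {a | g a = i ∧ a ∈ Survivors I ρ L} := by
      ext a
      simp only [Set.mem_image, Set.mem_setOf_eq]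
      constructor
      · rintro ⟨ι, hι, rfl⟩
        exact ⟨(e i ι).2, hι⟩
      · rintro ⟨hga, hsa⟩
        refine ⟨(e i).symm ⟨a, hga⟩, ?_, ?_⟩
        · rw [Equiv.apply_symm_apply]
          exact hsa
        · rw [Equiv.apply_symm_apply]
    rw [← this]
    rw [Set.ncard_image_of_injective _
      (fun ι ι' hx => (e i).injective (Subtype.val_injective hx))]
  have hNsum : (Survivors I ρ L).ncard = ∑ i, (Survivors (Ii i) (ρs i) L).ncard := by
    rw [← ncard_fiber_sum g (Survivors I ρ L)]
    exact Finset.sum_congr rfl (fun i _ => (himg i).symm)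
  -- per-group bound
  have hterm : ∀ i, (Survivors (Ii i) (ρs i) L).ncard
      ≤ maxSurvivors (Ii i) (Fin (b i)) := by
    intro i
    by_cases hbi : b i = 0
    · haveI : IsEmpty (Fin (b i)) := by rw [hbi]; infer_instance
      have : Survivors (Ii i) (ρs i) L = ∅ := Set.eq_empty_of_isEmpty _
      rw [this, Set.ncard_empty]
      exact Nat.zero_le _
    · haveI : Nonempty (Fin (b i)) := ⟨⟨0, Nat.pos_of_ne_zero hbi⟩⟩
      obtain ⟨ρ'', L'', hv'', hsv''⟩ := IsWeakPlan.to_valid L (ρs i) (hweak i)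
      apply le_csSup (bddAbove_planSet (Ii i))
      exact ⟨ρ'', L'', hv'', by rw [hsv'']⟩
  calc (Survivors I ρ L).ncard ≤ ∑ i, maxSurvivors (Ii i) (Fin (b i)) := by
        rw [hNsum]; exact Finset.sum_le_sum (fun i _ => hterm i)
    _ ≤ _ := by
        apply le_csSup
        · refine ⟨Fintype.card A, ?_⟩
          rintro M ⟨b', hb', rfl⟩
          calc ∑ i, maxSurvivors (I.restrict (P i ∪ {I.s, I.t}) _ _) (Fin (b' i))
              ≤ ∑ i, b' i := Finset.sum_le_sum (fun i _ => by
                simpa using maxSurvivors_le_card (A := Fin (b' i)) _)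
            _ = Fintype.card A := hb'
        · exact ⟨b, hbsum, rfl⟩

theorem dir2 {V A : Type} [Fintype V] [Fintype A]
    (I : RPInstance V) (ℓ : ℕ) (hℓ : 1 ≤ ℓ) (P : Fin ℓ → Set V)
    (hcover : ∀ v : V, v ≠ I.s → v ≠ I.t → ∃! i : Fin ℓ, v ∈ P i) :
    sSup {N : ℕ | ∃ b : Fin ℓ → ℕ, (∑ i, b i) = Fintype.card A ∧
        N = ∑ i, maxSurvivors
          (I.restrict (P i ∪ {I.s, I.t}) (by simp) (by simp)) (Fin (b i))}
      ≤ maxSurvivors I A := by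
  classical
  apply natSSup_le
  rintro N ⟨b, hbsum, rfl⟩
  have hsV : ∀ i : Fin ℓ, I.s ∈ P i ∪ {I.s, I.t} := fun i => by simp
  have htV : ∀ i : Fin ℓ, I.t ∈ P i ∪ {I.s, I.t} := fun i => by simp
  set V' : Fin ℓ → Set V := fun i => P i ∪ {I.s, I.t} with hV'
  set Ii : (i : Fin ℓ) → RPInstance ↥(V' i) :=
    fun i => I.restrict (P i ∪ {I.s, I.t}) (hsV i) (htV i) with hIi
  rcases isEmpty_or_nonempty A with hA | hA
  · -- no assets at all
    have hcard : Fintype.card A = 0 := Fintype.card_eq_zero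
    have hbi : ∀ i, b i = 0 := by
      intro i
      have := Finset.sum_eq_zero_iff.mp (hbsum.trans hcard) i (Finset.mem_univ i)
      exact this
    have hopt : ∀ i, maxSurvivors (Ii i) (Fin (b i)) = 0 := by
      intro i
      haveI : IsEmpty (Fin (b i)) := by rw [hbi i]; infer_instance
      exact maxSurvivors_of_isEmpty _
    rw [Finset.sum_eq_zero (fun i _ => hopt i)]
    exact Nat.zero_le _
  · -- main case
    have hplans : ∀ i : Fin ℓ, ∃ (ρp : Fin (b i) → ℕ → Option ↥(V' i)) (Lp : ℕ),
        IsWeakPlan (Ii i) ρp Lp ∧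
        (Survivors (Ii i) ρp Lp).ncard = maxSurvivors (Ii i) (Fin (b i)) ∧
        (∀ j < Lp, ∃ ι, ρp ι (j + 1) ≠ ρp ι j) ∧
        (∀ j < Lp, ∃ ι, ρp ι j ≠ some (Ii i).t ∧ ρp ι j ≠ none) ∧
        (b i ≠ 0 → 1 ≤ Lp) := by
      intro i
      by_cases hne : {M : ℕ | ∃ (ρ : Fin (b i) → ℕ → Option ↥(V' i)) (L : ℕ),
          IsValidPlan (Ii i) ρ L ∧ (Survivors (Ii i) ρ L).ncard = M}.Nonempty
      · have hmem := Nat.sSup_mem hne (bddAbove_planSet (Ii i))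
        obtain ⟨ρp, Lp, hvp, hcardp⟩ := hmem
        have hb0 : b i ≠ 0 := by
          intro h0
          haveI : IsEmpty (Fin (b i)) := by rw [h0]; infer_instance
          exact not_validPlan_of_isEmpty hvp
        haveI : Nonempty (Fin (b i)) := ⟨⟨0, Nat.pos_of_ne_zero hb0⟩⟩
        exact ⟨ρp, Lp, hvp.weak, hcardp,
          fun j hj => hvp.progress j (hvp.unsettled hj),
          fun j hj => hvp.unsettled hj,
          fun _ => hvp.weak.length_pos⟩
      · have h0 : maxSurvivors (Ii i) (Fin (b i)) = 0 := by
          unfold maxSurvivors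
          rw [Set.not_nonempty_iff_eq_empty.mp hne, csSup_empty]
          rfl
        by_cases hbi : b i = 0
        · haveI : IsEmpty (Fin (b i)) := by rw [hbi]; infer_instance
          refine ⟨fun ι j => none, 0, ?_, ?_, by omega, by omega, fun h => absurd hbi h⟩
          · exact ⟨fun ι => isEmptyElim ι, fun ι => isEmptyElim ι, fun ι => isEmptyElim ι,
              fun ι => isEmptyElim ι, fun ι => isEmptyElim ι, fun ι => isEmptyElim ι,
              fun ι => isEmptyElim ι⟩
          · rw [h0, Set.eq_empty_of_isEmpty (Survivors (Ii i) (fun ι j => none) 0),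
              Set.ncard_empty]
        · refine ⟨fun ι j => if j = 0 then some (Ii i).s else none, 1, ?_, ?_, ?_, ?_, fun _ => le_rfl⟩
          · constructor
            · intro ι; simp
            · intro ι j hj; simp at hj
            · intro ι j hj
              rcases Nat.eq_zero_or_pos j with rfl | hjp
              · rcases hj with hj | hj
                · simp only [if_pos rfl] at hj
                  exact absurd (Option.some_injective _ hj) (Ii i).s_ne_t
                · simp at hj
              · simp [Nat.pos_iff_ne_zero.mp hjp]
            · intro ι j v hj; simp at hj
            · intro ι ι' hne' j heq
              rcases Nat.eq_zero_or_pos j with rfl | hjp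
              · exact Or.inl (by simp)
              · exact Or.inr (Or.inr (by simp [Nat.pos_iff_ne_zero.mp hjp]))
            · intro ι j rr hrr hocc hact
              rcases Nat.eq_zero_or_pos j with rfl | hjp
              · simp only [if_pos rfl] at hocc
                have : (Ii i).s = rr := Option.some_injective _ hocc
                exact absurd (this ▸ hrr) (Ii i).s_not_trap
              · simp [Nat.pos_iff_ne_zero.mp hjp] at hocc
            · intro ι; simp
          · rw [h0]
            have : Survivors (Ii i) (fun (ι : Fin (b i)) j => if j = 0 then some (Ii i).s else none) 1 = ∅ := by
              ext ι; simp [Survivors]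
            rw [this, Set.ncard_empty]
          · intro j hj
            have hj0 : j = 0 := by omega
            subst hj0
            exact ⟨⟨0, Nat.pos_of_ne_zero hbi⟩, by simp⟩
          · intro j hj
            have hj0 : j = 0 := by omega
            subst hj0
            refine ⟨⟨0, Nat.pos_of_ne_zero hbi⟩, ?_, ?_⟩
            · simp only [if_pos rfl]
              intro hE
              exact (Ii i).s_ne_t (Option.some_injective _ hE)
            · simp
    choose ρp Lp hweak hcard hmov huns hpos using hplans
    set Lnat : ℕ → ℕ := fun n => if h : n < ℓ then Lp ⟨n, h⟩ else 0 with hLnat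
    set off : ℕ → ℕ := fun n => ∑ k ∈ Finset.range n, Lnat k with hoff
    set LT := off ℓ with hLT
    have hLnatF : ∀ i : Fin ℓ, Lnat i.val = Lp i := by
      intro i
      simp only [hLnat, dif_pos i.isLt]
    have hoffmono : ∀ {m m' : ℕ}, m ≤ m' → off m ≤ off m' := by
      intro m m' h
      exact Finset.sum_le_sum_of_subset (Finset.range_subset_range.mpr h)
    have hoffsucc : ∀ n : ℕ, off (n + 1) = off n + Lnat n := by
      intro n
      simp only [hoff]
      exact Finset.sum_range_succ Lnat n
    have hoffL : ∀ i : Fin ℓ, off i.val + Lp i ≤ LT := by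
      intro i
      have h1 : off (i.val + 1) ≤ LT := hoffmono i.isLt
      rw [hoffsucc, hLnatF] at h1
      exact h1
    set τ : Fin ℓ → ℕ → ℕ := fun i j => min (j - off i.val) (Lp i) with hτ
    set ρc : (Σ i : Fin ℓ, Fin (b i)) → ℕ → Option V :=
      fun x j => Option.map Subtype.val (ρp x.1 x.2 (τ x.1 j)) with hρc
    have hoffn : ∀ m : ℕ, off m = ∑ k ∈ Finset.range m, Lnat k := fun _ => rfl
    have hLTn : LT = ∑ k ∈ Finset.range ℓ, Lnat k := rfl
    have hτ0 : ∀ (i : Fin ℓ) (j : ℕ), j ≤ off i.val → τ i j = 0 := by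
      intro i j h; simp only [hτ]; omega
    have hτsucc : ∀ (i : Fin ℓ) (j : ℕ), τ i (j + 1) = τ i j ∨ τ i (j + 1) = τ i j + 1 := by
      intro i j; simp only [hτ]; omega
    have hτtop : ∀ (i : Fin ℓ) (j : ℕ), off i.val + Lp i ≤ j → τ i j = Lp i := by
      intro i j h; simp only [hτ]; omega
    have hmapt : ∀ (i : Fin ℓ) (o : Option ↥(V' i)),
        Option.map Subtype.val o = some I.t → o = some (Ii i).t := by
      intro i o h
      obtain ⟨y, hy, hyv⟩ := Option.map_eq_some_iff.mp h
      rw [hy]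
      exact congrArg some (Subtype.ext hyv)
    have hmaps : ∀ (i : Fin ℓ) (o : Option ↥(V' i)),
        Option.map Subtype.val o = some I.s → o = some (Ii i).s := by
      intro i o h
      obtain ⟨y, hy, hyv⟩ := Option.map_eq_some_iff.mp h
      rw [hy]
      exact congrArg some (Subtype.ext hyv)
    have hvalid : IsValidPlan I ρc LT := by
      constructor
      · -- start
        intro x
        show Option.map Subtype.val (ρp x.1 x.2 (τ x.1 0)) = some I.s
        rw [hτ0 x.1 0 (Nat.zero_le _), (hweak x.1).start x.2]
        rfl
      · -- no_return
        intro x j hj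
        show Option.map Subtype.val (ρp x.1 x.2 (τ x.1 j)) = some I.s
        rcases hτsucc x.1 j with he | he
        · rw [← he]; exact hj
        · have hy := hmaps x.1 _ hj
          rw [he] at hy
          rw [(hweak x.1).no_return x.2 (τ x.1 j) hy]
          rfl
      · -- stay_end
        intro x j hj
        show Option.map Subtype.val (ρp x.1 x.2 (τ x.1 (j + 1)))
          = Option.map Subtype.val (ρp x.1 x.2 (τ x.1 j))
        rcases hτsucc x.1 j with he | he
        · rw [he]
        · have hj' : ρp x.1 x.2 (τ x.1 j) = some (Ii x.1).t ∨ ρp x.1 x.2 (τ x.1 j) = none := by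
            rcases hj with hj | hj
            · exact Or.inl (hmapt x.1 _ hj)
            · exact Or.inr (Option.map_eq_none_iff.mp hj)
          rw [he, (hweak x.1).stay_end x.2 (τ x.1 j) hj']
      · -- move
        intro x j v hj
        show ∃ u, Option.map Subtype.val (ρp x.1 x.2 (τ x.1 j)) = some u ∧ (u = v ∨ I.G.Adj u v)
        rcases hτsucc x.1 j with he | he
        · refine ⟨v, ?_, Or.inl rfl⟩
          rw [← he]
          exact hj
        · obtain ⟨y, hy, hyv⟩ := Option.map_eq_some_iff.mp hj
          rw [he] at hy
          obtain ⟨u, hu, huv⟩ := (hweak x.1).move x.2 (τ x.1 j) y hy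
          refine ⟨u.val, by rw [hu]; rfl, ?_⟩
          rcases huv with rfl | hadj
          · exact Or.inl hyv
          · refine Or.inr ?_
            rw [← hyv]
            exact hadj
      · -- no_collision
        intro x x' hne j heq
        simp only [hρc] at heq ⊢
        rcases eq_or_ne x.1 x'.1 with h1 | h1
        · obtain ⟨i, ι⟩ := x
          obtain ⟨i', ι'⟩ := x'
          dsimp only at h1 heq ⊢
          subst h1
          have hne' : ι ≠ ι' := by
            intro h
            exact hne (by rw [h])
          have heq' : ρp i ι (τ i j) = ρp i ι' (τ i j) :=
            Option.map_injective Subtype.val_injective heq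
          rcases (hweak i).no_collision ι ι' hne' (τ i j) heq' with hx | hx | hx
          · exact Or.inl (by rw [hx]; rfl)
          · exact Or.inr (Or.inl (by rw [hx]; rfl))
          · exact Or.inr (Or.inr (by rw [hx]; rfl))
        · by_cases ho : Option.map Subtype.val (ρp x.1 x.2 (τ x.1 j)) = none
          · exact Or.inr (Or.inr ho)
          · obtain ⟨w, hw⟩ := Option.ne_none_iff_exists'.mp ho
            obtain ⟨y, hy, hyv⟩ := Option.map_eq_some_iff.mp hw
            obtain ⟨y', hy', hyv'⟩ := Option.map_eq_some_iff.mp (heq.symm.trans hw)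
            by_cases hws : w = I.s
            · exact Or.inl (hws ▸ hw)
            · by_cases hwt : w = I.t
              · exact Or.inr (Or.inl (hwt ▸ hw))
              · exfalso
                have hm1 : w ∈ P x.1 := by
                  have hyy : w ∈ V' x.1 := by rw [← hyv]; exact y.2
                  rcases hyy with hP | hP
                  · exact hP
                  · rcases hP with hP | hP
                    · exact absurd hP hws
                    · exact absurd hP hwt
                have hm2 : w ∈ P x'.1 := by
                  have hyy : w ∈ V' x'.1 := by rw [← hyv']; exact y'.2
                  rcases hyy with hP | hP
                  · exact hP
                  · rcases hP with hP | hP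
                    · exact absurd hP hws
                    · exact absurd hP hwt
                obtain ⟨iu, hiu, huniq⟩ := hcover w hws hwt
                exact h1 ((huniq x.1 hm1).trans (huniq x'.1 hm2).symm)
      · -- trap_kill
        intro x j r hr hocc hact
        show Option.map Subtype.val (ρp x.1 x.2 (τ x.1 (j + 1))) = none
        obtain ⟨y, hy, hyv⟩ := Option.map_eq_some_iff.mp hocc
        have hrs : r ≠ I.s := fun hx => I.s_not_trap (hx ▸ hr)
        have hrt : r ≠ I.t := fun hx => I.t_not_trap (hx ▸ hr)
        have hyR : y ∈ (Ii x.1).R := show (y : V) ∈ I.R by rw [hyv]; exact hr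
        have hτne : τ x.1 j ≠ Lp x.1 := by
          intro hE
          rw [hE] at hy
          rcases (hweak x.1).finished x.2 with hf | hf <;> rw [hf] at hy
          · exact hrt (by rw [← hyv, (Option.some_injective _ hy.symm : y = (Ii x.1).t)]; rfl)
          · cases hy
        have hτ0' : τ x.1 j ≠ 0 := by
          intro hE
          rw [hE, (hweak x.1).start x.2] at hy
          exact hrs (by rw [← hyv, ← (Option.some_injective _ hy : (Ii x.1).s = y)]; rfl)
        have hwin : off x.1.val ≤ j ∧ j - off x.1.val < Lp x.1 ∧ τ x.1 j = j - off x.1.val := by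
          simp only [hτ] at hτne hτ0' ⊢
          omega
        obtain ⟨hwin1, hwin2, hwin3⟩ := hwin
        have hτj1 : τ x.1 (j + 1) = τ x.1 j + 1 := by
          simp only [hτ] at hwin3 ⊢
          omega
        have hsub : TrapActive (Ii x.1) (ρp x.1) y (τ x.1 j) := by
          intro ι'' ℓℓ h1 hc hocc''
          have hc' : ℓℓ ≤ I.c r := by
            have : (Ii x.1).c y = I.c r := by rw [← hyv]; rfl
            rw [← this]
            exact hc
          rcases Nat.lt_or_ge (τ x.1 j) ℓℓ with hcase | hcase
          · rw [(by omega : τ x.1 j - ℓℓ = 0), (hweak x.1).start ι''] at hocc''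
            exact hrs (by rw [← hyv, ← (Option.some_injective _ hocc'' : (Ii x.1).s = y)]; rfl)
          · have hful := hact ⟨x.1, ι''⟩ ℓℓ h1 hc'
            apply hful
            show Option.map Subtype.val (ρp x.1 ι'' (τ x.1 (j - ℓℓ))) = some r
            have hidx : τ x.1 (j - ℓℓ) = τ x.1 j - ℓℓ := by
              simp only [hτ] at hwin3 ⊢
              omega
            rw [hidx, hocc'']
            rw [← hyv]
            rfl
        have hkill := (hweak x.1).trap_kill x.2 (τ x.1 j) y hyR hy hsub
        rw [hτj1, hkill]
        rfl
      · -- progress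
        intro j hj
        obtain ⟨x, hx1, hx2⟩ := hj
        have hjLT : j < LT := by
          by_contra hge
          push_neg at hge
          have hE : τ x.1 j = Lp x.1 := hτtop x.1 j (le_trans (hoffL x.1) hge)
          have hval : ρc x j = Option.map Subtype.val (ρp x.1 x.2 (Lp x.1)) := by
            simp only [hρc, hE]
          rcases (hweak x.1).finished x.2 with hf | hf <;> rw [hf] at hval
          · exact hx1 hval
          · exact hx2 hval
        rw [hLTn] at hjLT
        obtain ⟨n, hn, h1, h2⟩ := range_sum_cover Lnat ℓ j hjLT
        rw [← hoffn] at h1 h2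
        have hLn : Lnat n = Lp ⟨n, hn⟩ := by simp only [hLnat, dif_pos hn]
        have hiv : ((⟨n, hn⟩ : Fin ℓ) : ℕ) = n := rfl
        obtain ⟨ι, hι⟩ := hmov ⟨n, hn⟩ (j - off n) (by omega)
        refine ⟨⟨⟨n, hn⟩, ι⟩, ?_⟩
        show Option.map Subtype.val (ρp ⟨n, hn⟩ ι (τ ⟨n, hn⟩ (j + 1)))
          ≠ Option.map Subtype.val (ρp ⟨n, hn⟩ ι (τ ⟨n, hn⟩ j))
        have e1 : τ ⟨n, hn⟩ j = j - off n := by simp only [hτ]; omega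
        have e2 : τ ⟨n, hn⟩ (j + 1) = (j - off n) + 1 := by simp only [hτ]; omega
        rw [e1, e2]
        intro hE
        exact hι (Option.map_injective Subtype.val_injective hE)
      · -- finished
        intro x
        show Option.map Subtype.val (ρp x.1 x.2 (τ x.1 LT)) = some I.t
          ∨ Option.map Subtype.val (ρp x.1 x.2 (τ x.1 LT)) = none
        rw [hτtop x.1 LT (hoffL x.1)]
        rcases (hweak x.1).finished x.2 with hf | hf <;> rw [hf]
        · exact Or.inl rfl
        · exact Or.inr rfl
      · -- tight
        have hbex : ∃ i : Fin ℓ, b i ≠ 0 := by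
          by_contra hall
          push_neg at hall
          have : Fintype.card A = 0 := by
            rw [← hbsum]
            exact Finset.sum_eq_zero (fun i _ => hall i)
          exact absurd this (Nat.pos_iff_ne_zero.mp Fintype.card_pos)
        obtain ⟨i0, hb0⟩ := hbex
        have hLT1 : 1 ≤ LT := by
          have h1 := hpos i0 hb0
          have h2 := hoffL i0
          omega
        obtain ⟨n, hn, h1, h2⟩ := range_sum_cover Lnat ℓ (LT - 1) (by omega)
        rw [← hoffn] at h1 h2
        have hLn : Lnat n = Lp ⟨n, hn⟩ := by simp only [hLnat, dif_pos hn]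
        have hiv : ((⟨n, hn⟩ : Fin ℓ) : ℕ) = n := rfl
        obtain ⟨ι, hι1, hι2⟩ := huns ⟨n, hn⟩ (LT - 1 - off n) (by omega)
        refine ⟨⟨⟨n, hn⟩, ι⟩, ?_, ?_⟩
        · show Option.map Subtype.val (ρp ⟨n, hn⟩ ι (τ ⟨n, hn⟩ (LT - 1))) ≠ some I.t
          have e1 : τ ⟨n, hn⟩ (LT - 1) = LT - 1 - off n := by simp only [hτ]; omega
          rw [e1]
          intro hE
          exact hι1 (hmapt _ _ hE)
        · show Option.map Subtype.val (ρp ⟨n, hn⟩ ι (τ ⟨n, hn⟩ (LT - 1))) ≠ none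
          have e1 : τ ⟨n, hn⟩ (LT - 1) = LT - 1 - off n := by simp only [hτ]; omega
          rw [e1]
          intro hE
          exact hι2 (Option.map_eq_none_iff.mp hE)
    -- survivors of the combined plan
    have hSc : (Survivors I ρc LT).ncard
        = ∑ i, (Survivors (Ii i) (ρp i) (Lp i)).ncard := by
      have hset : Survivors I ρc LT
          = {x : Σ i : Fin ℓ, Fin (b i) | x.2 ∈ Survivors (Ii x.1) (ρp x.1) (Lp x.1)} := by
        ext x
        simp only [Survivors, Set.mem_setOf_eq, hρc, hτtop x.1 LT (hoffL x.1)]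
        constructor
        · intro hx
          exact hmapt x.1 _ hx
        · intro hx
          rw [hx]
          rfl
      rw [hset]
      exact ncard_sigma fun i => Survivors (Ii i) (ρp i) (Lp i)
    have hE : Fintype.card A = Fintype.card (Σ i : Fin ℓ, Fin (b i)) := by
      rw [Fintype.card_sigma]
      simp only [Fintype.card_fin]
      exact hbsum.symm
    set E : A ≃ Σ i : Fin ℓ, Fin (b i) := Fintype.equivOfCardEq hE with hEdef
    apply le_csSup (bddAbove_planSet I)
    refine ⟨fun a => ρc (E a), LT, hvalid.comp_equiv E, ?_⟩
    rw [survivors_comp_equiv E I ρc LT, hSc]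
    exact Finset.sum_congr rfl (fun i _ => hcard i)

/-- **dynamic programming over disjoint paths.**
If `G ∖ {s,t}` is a disjoint union of paths `P 0, …, P (ℓ-1)` (pairwise
disjoint, covering `V ∖ {s,t}`, each inducing a path, with no edges between
different paths), then the maximum number of surviving assets for `I` with `m`
assets equals the maximum of `∑ i, OPT_i (b i)` over all ways to write
`m = ∑ i, b i`, where `OPT_i b` is the optimum of the sub-instance induced on
`P i ∪ {s, t}` with `b` assets. -/
theorem disjoint_paths_optimum {V A : Type} [Fintype V] [Fintype A]
    (I : RPInstance V) (ℓ : ℕ) (hℓ : 1 ≤ ℓ) (P : Fin ℓ → Set V)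
    (hcover : ∀ v : V, v ≠ I.s → v ≠ I.t → ∃! i : Fin ℓ, v ∈ P i)
    (hst : ∀ i : Fin ℓ, I.s ∉ P i ∧ I.t ∉ P i)
    (hpath : ∀ i : Fin ℓ, InducesPath I.G (P i))
    (hsep : ∀ i j : Fin ℓ, i ≠ j → ∀ u ∈ P i, ∀ w ∈ P j, ¬ I.G.Adj u w) :
    maxSurvivors I A =
      sSup {N : ℕ | ∃ b : Fin ℓ → ℕ, (∑ i, b i) = Fintype.card A ∧
        N = ∑ i, maxSurvivors
          (I.restrict (P i ∪ {I.s, I.t}) (by simp) (by simp)) (Fin (b i))} :=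
  le_antisymm (dir1 I ℓ hℓ P hcover hst hsep) (dir2 I ℓ hℓ P hcover)
end

section
/- Let x ≥ 1 and let G be the path s, r_1, r_2, …, r_x, t where each r_i is a trap with reload time c(r_i) = x − i + 1 (so the reload times along the path are x, x−1, …, 1). Then there exists a valid plan with at least one surviving asset if and only if the number of assets m satisfies m ≥ x + 1. -/
private lemma path_adj_elim {n : ℕ} {u v : Fin n} (h : (pathGraph n).Adj u v) :
    (v : ℕ) = (u : ℕ) + 1 ∨ (u : ℕ) = (v : ℕ) + 1 := by
  rw [pathGraph, SimpleGraph.fromRel_adj] at h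
  tauto

private lemma nat_ivt (p : ℕ → ℕ) (h0 : p 0 = 0) :
    ∀ L : ℕ, (∀ j < L, p (j + 1) ≤ p j + 1) → ∀ i ≤ p L, ∃ j ≤ L, p j = i := by
  intro L
  induction L with
  | zero => intro _ i hi; exact ⟨0, le_refl 0, by omega⟩
  | succ L ih =>
    intro hstep i hi
    by_cases h : i ≤ p L
    · obtain ⟨j, hj, hpj⟩ := ih (fun j hj => hstep j (by omega)) i h
      exact ⟨j, by omega, hpj⟩
    · have := hstep L (by omega)
      exact ⟨L + 1, le_refl _, by omega⟩

private def vert (x : ℕ) (i : Fin x) : Fin (x + 2) :=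
  ⟨(i : ℕ) + 1, by have := i.isLt; omega⟩

private theorem destruction_fwd {A : Type} [Fintype A] (x : ℕ) (hx : 1 ≤ x)
    (I : RPInstance (Fin (x + 2)))
    (hG : I.G = pathGraph (x + 2))
    (hs : (I.s : ℕ) = 0) (ht : (I.t : ℕ) = x + 1)
    (hR : ∀ v : Fin (x + 2), v ∈ I.R ↔ (1 ≤ (v : ℕ) ∧ (v : ℕ) ≤ x))
    (ρ : A → ℕ → Option (Fin (x + 2))) (L : ℕ)
    (hv : IsValidPlan I ρ L) (hcard : 1 ≤ (Survivors I ρ L).ncard) :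
    x + 1 ≤ Fintype.card A := by
  classical
  have hw : (Survivors I ρ L).Nonempty := by
    rcases Set.eq_empty_or_nonempty (Survivors I ρ L) with h | h
    · rw [h] at hcard; simp at hcard
    · exact h
  obtain ⟨w, hwL⟩ := hw
  have hwL : ρ w L = some I.t := hwL
  -- none persists
  have hnonepers : ∀ (a : A) (j d : ℕ), ρ a j = none → ρ a (j + d) = none := by
    intro a j d h
    induction d with
    | zero => exact h
    | succ d ih => rw [show j + (d + 1) = (j + d) + 1 from rfl,
        hv.stay_end a (j + d) (Or.inr ih)]; exact ih
  -- t persists for w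
  have htpers : ∀ j, L ≤ j → ρ w j = some I.t := by
    intro j hj
    obtain ⟨d, rfl⟩ := Nat.exists_eq_add_of_le hj
    clear hj
    induction d with
    | zero => simpa using hwL
    | succ d ih =>
      rw [show L + (d + 1) = (L + d) + 1 from rfl, hv.stay_end w (L + d) (Or.inl ih)]
      exact ih
  -- w is alive up to L
  have hsome : ∀ j ≤ L, ρ w j ≠ none := by
    have H : ∀ d, ρ w (L - d) ≠ none := by
      intro d
      induction d with
      | zero => simp only [Nat.sub_zero, hwL]; simp
      | succ d ih =>
        by_cases hdL : L ≤ d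
        · rw [show L - (d + 1) = 0 by omega, hv.start w]; simp
        · cases h2 : ρ w (L - d) with
          | none => exact absurd h2 ih
          | some v =>
            obtain ⟨u, hu, _⟩ := hv.move w (L - (d + 1)) v
              (by rw [show L - (d + 1) + 1 = L - d by omega]; exact h2)
            rw [hu]; simp
    intro j hj
    have := H (L - j)
    rwa [show L - (L - j) = j by omega] at this
  -- position function of w
  set p : ℕ → ℕ := fun j => (((ρ w j).getD I.t : Fin (x + 2)) : ℕ) with hp
  have hp0 : p 0 = 0 := by simp only [hp, hv.start w, Option.getD_some]; exact hs
  have hpL : p L = x + 1 := by simp only [hp, hwL, Option.getD_some]; exact ht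
  have hstep : ∀ j < L, p (j + 1) ≤ p j + 1 := by
    intro j hj
    cases h2 : ρ w (j + 1) with
    | none => exact absurd h2 (hsome (j + 1) (by omega))
    | some v =>
      obtain ⟨u, hu, hadj⟩ := hv.move w j v h2
      simp only [hp, hu, h2, Option.getD_some]
      rcases hadj with h | h
      · rw [h]; omega
      · rw [hG] at h
        rcases path_adj_elim h with h | h <;> omega
  -- each trap is visited; first visitor and first time
  have key : ∀ i : Fin x, ∃ (b : A) (j : ℕ),
      ρ b j = some (vert x i) ∧ ∀ j' < j, ∀ b' : A, ρ b' j' ≠ some (vert x i) := by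
    intro i
    have hvisit : ∃ j, ∃ b : A, ρ b j = some (vert x i) := by
      obtain ⟨j, hjL, hpj⟩ := nat_ivt p hp0 L hstep ((i : ℕ) + 1) (by rw [hpL]; omega)
      cases h2 : ρ w j with
      | none => exact absurd h2 (hsome j hjL)
      | some u =>
        refine ⟨j, w, ?_⟩
        have : (u : ℕ) = (i : ℕ) + 1 := by
          simp only [hp, h2, Option.getD_some] at hpj; exact hpj
        rw [h2]
        congr 1
        exact Fin.ext (by simp [vert, this])
    obtain ⟨b, hb⟩ := Nat.find_spec hvisit
    exact ⟨b, Nat.find hvisit, hb, fun j' hj' b' hb' => Nat.find_min hvisit hj' ⟨b', hb'⟩⟩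
  choose f σ hocc hmin using key
  -- the first visitor of each trap dies
  have hdead : ∀ (i : Fin x) (j : ℕ), σ i < j → ρ (f i) j = none := by
    intro i j hij
    have hkill : ρ (f i) (σ i + 1) = none := by
      apply hv.trap_kill (f i) (σ i) (vert x i) ?_ (hocc i)
      · intro b ℓ h1 h2
        rcases Nat.lt_or_ge (σ i - ℓ) (σ i) with hlt | hge
        · exact hmin i _ hlt b
        · rw [show σ i - ℓ = 0 by omega, hv.start b]
          intro hcon
          have : I.s = vert x i := Option.some.inj hcon
          have : (I.s : ℕ) = (i : ℕ) + 1 := by rw [this]; rfl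
          omega
      · rw [hR]
        refine ⟨by simp [vert], by simp [vert]⟩
    have := hnonepers (f i) (σ i + 1) (j - (σ i + 1)) hkill
    rwa [show σ i + 1 + (j - (σ i + 1)) = j by omega] at this
  -- the first visitors differ from w
  have hfw : ∀ i, f i ≠ w := by
    intro i hfi
    rcases Nat.lt_or_ge (σ i) L with h | h
    · have := hdead i L h
      rw [hfi, hwL] at this
      simp at this
    · have h1 := htpers (σ i) h
      have h2 := hocc i
      rw [hfi, h1] at h2
      have : (I.t : ℕ) = (i : ℕ) + 1 := by
        have : I.t = vert x i := Option.some.inj h2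
        rw [this]; rfl
      have := i.isLt; omega
  -- first visitors are pairwise distinct
  have hfinj : Function.Injective f := by
    have key2 : ∀ i i', σ i ≤ σ i' → f i = f i' → i = i' := by
      intro i i' hle he
      rcases eq_or_lt_of_le hle with heq | hlt
      · have h1 := hocc i
        have h2 := hocc i'
        rw [← he, ← heq, h1] at h2
        have : vert x i = vert x i' := Option.some.inj h2
        have : (i : ℕ) + 1 = (i' : ℕ) + 1 := congrArg Fin.val this
        exact Fin.ext (by omega)
      · have hd := hdead i (σ i') hlt
        rw [he, hocc i'] at hd
        simp at hd
    intro i i' he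
    rcases le_total (σ i) (σ i') with h | h
    · exact key2 i i' h he
    · exact (key2 i' i h he.symm).symm
  -- build the injection Fin (x+1) → A
  let F : Fin (x + 1) → A := fun i => if h : (i : ℕ) < x then f ⟨(i : ℕ), h⟩ else w
  have hFinj : Function.Injective F := by
    intro i j hij
    simp only [F] at hij
    split_ifs at hij with h1 h2 h2
    · have := hfinj hij
      have : (i : ℕ) = (j : ℕ) := by
        have := congrArg Fin.val this; simpa using this
      exact Fin.ext this
    · exact absurd hij (hfw _)
    · exact absurd hij.symm (hfw _)
    · exact Fin.ext (by omega)
  calc x + 1 = Fintype.card (Fin (x + 1)) := by simp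
    _ ≤ Fintype.card A := Fintype.card_le_of_injective F hFinj

private lemma path_adj_intro {n : ℕ} {u v : Fin n} (h : (v : ℕ) = (u : ℕ) + 1) :
    (pathGraph n).Adj u v := by
  rw [pathGraph, SimpleGraph.fromRel_adj]
  exact ⟨Fin.ne_of_val_ne (by omega), Or.inl h⟩

private def gp (x k j : ℕ) : Option (Fin (x + 2)) :=
  if k < x ∧ 2 * k + 1 < j then none
  else some ⟨min (j - k) (x + 1), by omega⟩

private lemma gp_eq_some {x k j : ℕ} {v : Fin (x + 2)} :
    gp x k j = some v ↔ ¬(k < x ∧ 2 * k + 1 < j) ∧ (v : ℕ) = min (j - k) (x + 1) := by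
  unfold gp
  split_ifs with h
  · simp [h]
  · simp [h, Fin.ext_iff, eq_comm]

private lemma gp_eq_none {x k j : ℕ} :
    gp x k j = none ↔ (k < x ∧ 2 * k + 1 < j) := by
  unfold gp; split_ifs with h <;> simp [h]

private theorem destruction_bwd {A : Type} [Fintype A] (x : ℕ) (hx : 1 ≤ x)
    (I : RPInstance (Fin (x + 2)))
    (hG : I.G = pathGraph (x + 2))
    (hs : (I.s : ℕ) = 0) (ht : (I.t : ℕ) = x + 1)
    (hm : x + 1 ≤ Fintype.card A) :
    ∃ (ρ : A → ℕ → Option (Fin (x + 2))) (L : ℕ),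
        IsValidPlan I ρ L ∧ 1 ≤ (Survivors I ρ L).ncard := by
  classical
  set m := Fintype.card A with hmdef
  let e := Fintype.equivFin A
  let κ : A → ℕ := fun a => ((e a : Fin m) : ℕ)
  have hκlt : ∀ a, κ a < m := fun a => (e a).isLt
  have hκinj : ∀ a a', κ a = κ a' → a = a' := fun a a' h => e.injective (Fin.val_injective h)
  have hκsurj : ∀ k < m, ∃ a, κ a = k := by
    intro k hk
    exact ⟨e.symm ⟨k, hk⟩, by simp [κ]⟩
  refine ⟨fun a j => gp x (κ a) j, m + x, ⟨?_, ?_, ?_, ?_, ?_, ?_, ?_, ?_, ?_⟩, ?_⟩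
  -- start
  · intro a
    show gp x (κ a) 0 = some I.s
    exact gp_eq_some.mpr ⟨by omega, by omega⟩
  -- no_return
  · intro a j h
    obtain ⟨h1, h2⟩ := gp_eq_some.mp h
    show gp x (κ a) j = some I.s
    exact gp_eq_some.mpr ⟨by omega, by omega⟩
  -- stay_end
  · intro a j h
    show gp x (κ a) (j + 1) = gp x (κ a) j
    rcases h with h | h
    · obtain ⟨h1, h2⟩ := gp_eq_some.mp h
      have h' : gp x (κ a) j = some I.t := h
      rw [h']
      exact gp_eq_some.mpr ⟨by omega, by omega⟩
    · have h' : gp x (κ a) j = none := h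
      rw [h']
      have := gp_eq_none.mp h
      exact gp_eq_none.mpr (by omega)
  -- move
  · intro a j v h
    obtain ⟨h1, h2⟩ := gp_eq_some.mp h
    refine ⟨⟨min (j - κ a) (x + 1), by omega⟩,
      gp_eq_some.mpr ⟨by omega, by simp⟩, ?_⟩
    by_cases he : min (j - κ a) (x + 1) = (v : ℕ)
    · exact Or.inl (Fin.ext (by simpa using he))
    · refine Or.inr ?_
      rw [hG]
      exact path_adj_intro (by simp; omega)
  -- no_collision
  · intro a a' hne j heq
    have hkne : κ a ≠ κ a' := fun h => hne (hκinj _ _ h)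
    cases h1 : gp x (κ a) j with
    | none => exact Or.inr (Or.inr rfl)
    | some v =>
      have heq' : gp x (κ a') j = some v := by
        have : gp x (κ a) j = gp x (κ a') j := heq
        rw [← this]; exact h1
      obtain ⟨c1, c2⟩ := gp_eq_some.mp h1
      obtain ⟨c3, c4⟩ := gp_eq_some.mp heq'
      by_cases hv0 : (v : ℕ) = 0
      · exact Or.inl (congrArg some (Fin.ext (hv0.trans hs.symm)))
      · by_cases hvt : (v : ℕ) = x + 1
        · exact Or.inr (Or.inl (congrArg some (Fin.ext (hvt.trans ht.symm))))
        · exfalso; omega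
  -- trap_kill
  · intro a j r hr hj hact
    obtain ⟨c1, c2⟩ := gp_eq_some.mp hj
    have hrs : (r : ℕ) ≠ 0 := by
      intro h
      exact I.s_not_trap (by rwa [show I.s = r from Fin.ext (by omega)])
    have hrt : (r : ℕ) ≠ x + 1 := by
      intro h
      exact I.t_not_trap (by rwa [show I.t = r from Fin.ext (by omega)])
    by_cases hkill : κ a < x ∧ (r : ℕ) = κ a + 1
    · show gp x (κ a) (j + 1) = none
      exact gp_eq_none.mpr ⟨hkill.1, by omega⟩
    · exfalso
      obtain ⟨b, hb⟩ := hκsurj (κ a - 1) (by have := hκlt a; omega)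
      apply hact b 1 le_rfl (I.c_pos r hr)
      show gp x (κ b) (j - 1) = some r
      rw [hb]
      exact gp_eq_some.mpr ⟨by omega, by omega⟩
  -- progress
  · intro j hyp
    obtain ⟨a, hat, han⟩ := hyp
    have c1 : ¬(κ a < x ∧ 2 * κ a + 1 < j) := fun h => han (gp_eq_none.mpr h)
    have c2 : min (j - κ a) (x + 1) ≠ x + 1 := by
      intro h
      exact hat (gp_eq_some.mpr ⟨c1, by rw [h, ht]⟩)
    by_cases hjk : κ a ≤ j
    · refine ⟨a, ?_⟩
      intro hcon
      have hcon' : gp x (κ a) (j + 1) = gp x (κ a) j := hcon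
      by_cases hn : κ a < x ∧ 2 * κ a + 1 < j + 1
      · rw [gp_eq_none.mpr hn] at hcon'
        exact han hcon'.symm
      · have e1 : gp x (κ a) (j + 1) = some ⟨min (j + 1 - κ a) (x + 1), by omega⟩ :=
          gp_eq_some.mpr ⟨hn, by simp⟩
        have e2 : gp x (κ a) j = some ⟨min (j - κ a) (x + 1), by omega⟩ :=
          gp_eq_some.mpr ⟨c1, by simp⟩
        rw [e1, e2] at hcon'
        simp only [Option.some.injEq, Fin.mk.injEq] at hcon'
        omega
    · push_neg at hjk
      obtain ⟨b, hb⟩ := hκsurj j (by have := hκlt a; omega)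
      refine ⟨b, ?_⟩
      intro hcon
      have hcon' : gp x (κ b) (j + 1) = gp x (κ b) j := hcon
      have e1 : gp x (κ b) (j + 1) = some ⟨min (j + 1 - κ b) (x + 1), by omega⟩ :=
        gp_eq_some.mpr ⟨by omega, by simp⟩
      have e2 : gp x (κ b) j = some ⟨min (j - κ b) (x + 1), by omega⟩ :=
        gp_eq_some.mpr ⟨by omega, by simp⟩
      rw [e1, e2] at hcon'
      simp only [Option.some.injEq, Fin.mk.injEq] at hcon'
      omega
  -- finished
  · intro a
    by_cases h : κ a < x
    · exact Or.inr (gp_eq_none.mpr ⟨h, by omega⟩)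
    · refine Or.inl (gp_eq_some.mpr ⟨by omega, ?_⟩)
      rw [ht]
      have := hκlt a
      omega
  -- tight
  · obtain ⟨b, hb⟩ := hκsurj (m - 1) (by omega)
    refine ⟨b, ?_, ?_⟩
    · intro hcon
      obtain ⟨c1, c2⟩ := gp_eq_some.mp hcon
      rw [ht] at c2
      omega
    · intro hcon
      have := gp_eq_none.mp hcon
      omega
  -- survivors
  · obtain ⟨b, hb⟩ := hκsurj (m - 1) (by omega)
    have hbs : b ∈ Survivors I (fun a j => gp x (κ a) j) (m + x) := by
      show gp x (κ b) (m + x) = some I.t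
      refine gp_eq_some.mpr ⟨by omega, ?_⟩
      rw [ht]; omega
    have : 0 < (Survivors I (fun a j => gp x (κ a) j) (m + x)).ncard :=
      (Set.ncard_pos (Set.toFinite _)).mpr ⟨b, hbs⟩
    omega

/-- **destruction gadget.**
Let the topology be the path `s, r_1, …, r_x, t` (on `Fin (x+2)`, with `s` at
position `0` and `t` at position `x+1`), where position `i ∈ {1, …, x}` is a
trap with reload time `x - i + 1` (so the reload times along the path are
`x, x-1, …, 1`).  Then there is a valid plan with at least one surviving asset
iff the number of assets `m` satisfies `m ≥ x + 1`. -/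
theorem destruction_gadget {A : Type} [Fintype A] (x : ℕ) (hx : 1 ≤ x)
    (I : RPInstance (Fin (x + 2)))
    (hG : I.G = pathGraph (x + 2))
    (hs : (I.s : ℕ) = 0) (ht : (I.t : ℕ) = x + 1)
    (hR : ∀ v : Fin (x + 2), v ∈ I.R ↔ (1 ≤ (v : ℕ) ∧ (v : ℕ) ≤ x))
    (hc : ∀ v : Fin (x + 2), v ∈ I.R → I.c v = x - (v : ℕ) + 1) :
    (∃ (ρ : A → ℕ → Option (Fin (x + 2))) (L : ℕ),
        IsValidPlan I ρ L ∧ 1 ≤ (Survivors I ρ L).ncard) ↔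
      x + 1 ≤ Fintype.card A := by
  constructor
  · rintro ⟨ρ, L, hv, hcard⟩
    exact destruction_fwd x hx I hG hs ht hR ρ L hv hcard
  · intro hm
    exact destruction_bwd x hx I hG hs ht hm
end
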